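/- arXiv:0707.0456 — 8 statements merged into one kernel-verified Lean document; each statement's English description precedes it below -/
import Mathlib

section
/- Let X be a metric space, x, y ∈ X, and let γ : [0,1] → X be a geodesic joining x to y. Then there exist real numbers a, b with 0 ≤ a < b ≤ 1 such that γ(a) = x, γ(b) = y, γ(t) ∉ {x, y} for all t ∈ (a, b), and the affinely reparametrized restriction s ↦ γ(a + s·(b − a)), s ∈ [0,1], is again a geodesic joining x to y. -/
/-- A map `γ : ℝ → X` (viewed on `[0,1]`) is a geodesic with speed `L` if `L > 0` and
every `t ∈ [0,1]` has a neighborhood `U ⊆ ℝ` on which `γ` is a local isometry up to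
the factor `L`: `dist (γ s) (γ s') = L * |s - s'|` for `s, s' ∈ U ∩ [0,1]`. -/
def IsGeodesicWithSpeed {X : Type*} [MetricSpace X] (γ : ℝ → X) (L : ℝ) : Prop :=
  0 < L ∧ ∀ t ∈ Set.Icc (0:ℝ) 1, ∃ U ∈ nhds t,
    ∀ s ∈ U ∩ Set.Icc (0:ℝ) 1, ∀ s' ∈ U ∩ Set.Icc (0:ℝ) 1,
      dist (γ s) (γ s') = L * |s - s'|

/-- A geodesic is a map with some positive speed. -/
def IsGeodesic {X : Type*} [MetricSpace X] (γ : ℝ → X) : Prop :=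
  ∃ L : ℝ, IsGeodesicWithSpeed γ L

/-- `B` is a blocking set for the configuration `(x, y)`: every geodesic joining `x` to `y`
has an interior point in `B`. -/
def Blocks {X : Type*} [MetricSpace X] (x y : X) (B : Set X) : Prop :=
  ∀ γ : ℝ → X, IsGeodesic γ → γ 0 = x → γ 1 = y → ∃ t ∈ Set.Ioo (0:ℝ) 1, γ t ∈ B

/-- The configuration `(x, y)` is secure: it has a finite blocking set. -/
def Secure {X : Type*} [MetricSpace X] (x y : X) : Prop :=
  ∃ B : Set X, B.Finite ∧ Blocks x y B

/-- `B` is a midpoint blocking set for `(x, y)`: every geodesic joining `x` to `y`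
has its midpoint in `B`. -/
def MidpointBlocks {X : Type*} [MetricSpace X] (x y : X) (B : Set X) : Prop :=
  ∀ γ : ℝ → X, IsGeodesic γ → γ 0 = x → γ 1 = y → γ (1/2 : ℝ) ∈ B

/-- The configuration `(x, y)` is midpoint secure: it has a finite midpoint blocking set. -/
def MidpointSecure {X : Type*} [MetricSpace X] (x y : X) : Prop :=
  ∃ B : Set X, B.Finite ∧ MidpointBlocks x y B

lemma fiber_finite {X : Type*} [MetricSpace X] {γ : ℝ → X} (hγ : IsGeodesic γ) (z : X) :
    {t | t ∈ Set.Icc (0:ℝ) 1 ∧ γ t = z}.Finite := by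
  obtain ⟨L, hL, h⟩ := hγ
  choose! U hU hloc using h
  obtain ⟨s, hsub, hcov⟩ := isCompact_Icc.elim_nhds_subcover U hU
  have key : ∀ t ∈ s, ({p | p ∈ Set.Icc (0:ℝ) 1 ∧ γ p = z} ∩ U t).Subsingleton := by
    intro t ht p hp q hq
    have hd := hloc t (hsub t ht) p ⟨hp.2, hp.1.1⟩ q ⟨hq.2, hq.1.1⟩
    rw [hp.1.2, hq.1.2, dist_self] at hd
    have : |p - q| = 0 := by
      rcases mul_eq_zero.1 hd.symm with h' | h'
      · exact absurd h' (ne_of_gt hL)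
      · exact h'
    have := abs_eq_zero.mp this
    linarith [this]
  have hsubset : {p | p ∈ Set.Icc (0:ℝ) 1 ∧ γ p = z} ⊆
      ⋃ t ∈ s, ({p | p ∈ Set.Icc (0:ℝ) 1 ∧ γ p = z} ∩ U t) := by
    intro p hp
    have := hcov hp.1
    simp only [Set.mem_iUnion] at this ⊢
    obtain ⟨t, ht, hpt⟩ := this
    exact ⟨t, ht, hp, hpt⟩
  exact Set.Finite.subset (Set.Finite.biUnion s.finite_toSet fun t ht => (key t ht).finite) hsubset

/-- Any geodesic joining `x` to `y` contains a segment joining `x` to `y` that avoids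
`x` and `y` in its interior, and whose affine reparametrization is again a geodesic
joining `x` to `y`. -/
theorem stmt0 {X : Type*} [MetricSpace X] (x y : X) (γ : ℝ → X)
    (hγ : IsGeodesic γ) (h0 : γ 0 = x) (h1 : γ 1 = y) :
    ∃ a b : ℝ, 0 ≤ a ∧ a < b ∧ b ≤ 1 ∧ γ a = x ∧ γ b = y ∧
      (∀ t ∈ Set.Ioo a b, γ t ≠ x ∧ γ t ≠ y) ∧
      (IsGeodesic (fun s : ℝ => γ (a + s * (b - a))) ∧
        (fun s : ℝ => γ (a + s * (b - a))) 0 = x ∧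
        (fun s : ℝ => γ (a + s * (b - a))) 1 = y) := by
  have hfy := fiber_finite hγ y
  have hfx := fiber_finite hγ x
  -- b = min positive time hitting y
  obtain ⟨b, hbmem, hbmin⟩ := Set.exists_min_image
    ({t | t ∈ Set.Icc (0:ℝ) 1 ∧ γ t = y} ∩ Set.Ioi 0) id
    (hfy.inter_of_left _)
    ⟨1, ⟨⟨by norm_num, h1⟩, by norm_num⟩⟩
  obtain ⟨⟨⟨hb0, hb1⟩, hby⟩, hbpos⟩ := hbmem
  -- a = max time < b hitting x
  obtain ⟨a, hamem, hamax⟩ := Set.exists_max_image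
    ({t | t ∈ Set.Icc (0:ℝ) 1 ∧ γ t = x} ∩ Set.Iio b) id
    (hfx.inter_of_left _)
    ⟨0, ⟨⟨by norm_num, h0⟩, hbpos⟩⟩
  obtain ⟨⟨⟨ha0, ha1⟩, hax⟩, hab⟩ := hamem
  obtain ⟨L, hL, hloc⟩ := hγ
  refine ⟨a, b, ha0, hab, hb1, hax, hby, ?_, ?_, by simpa using hax, by simpa using hby⟩
  · intro t ht
    have ht01 : t ∈ Set.Icc (0:ℝ) 1 := ⟨le_of_lt (lt_of_le_of_lt ha0 ht.1), le_of_lt (lt_of_lt_of_le ht.2 hb1)⟩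
    constructor
    · intro htx
      have := hamax t ⟨⟨ht01, htx⟩, ht.2⟩
      simp only [id] at this
      linarith [ht.1]
    · intro hty
      have := hbmin t ⟨⟨ht01, hty⟩, lt_of_le_of_lt ha0 ht.1⟩
      simp only [id] at this
      linarith [ht.2]
  · have hc : (0:ℝ) < b - a := sub_pos.mpr hab
    refine ⟨L * (b - a), mul_pos hL hc, ?_⟩
    intro t ht
    have hu : a + t * (b - a) ∈ Set.Icc (0:ℝ) 1 := by
      constructor
      · nlinarith [ht.1, ht.2]
      · nlinarith [ht.1, ht.2]
    obtain ⟨U, hU, hUloc⟩ := hloc _ hu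
    refine ⟨(fun s : ℝ => a + s * (b - a)) ⁻¹' U, ?_, ?_⟩
    · exact (Continuous.continuousAt (by continuity)).preimage_mem_nhds hU
    · intro s hs s' hs'
      have hmem : ∀ r : ℝ, r ∈ (fun s : ℝ => a + s * (b - a)) ⁻¹' U ∩ Set.Icc 0 1 →
          a + r * (b - a) ∈ U ∩ Set.Icc (0:ℝ) 1 := by
        intro r hr
        refine ⟨hr.1, ?_, ?_⟩
        · nlinarith [hr.2.1, hr.2.2]
        · nlinarith [hr.2.1, hr.2.2]
      have := hUloc _ (hmem s hs) _ (hmem s' hs')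
      rw [this]
      have : a + s * (b - a) - (a + s' * (b - a)) = (s - s') * (b - a) := by ring
      rw [this, abs_mul, abs_of_pos hc]
      ring
end

section
/- Let X be a metric space and (x, y) a configuration in X. If (x, y) is midpoint secure with finite midpoint blocking set B, then (x, y) is secure; moreover the finite set B ∖ {x, y} is a blocking set for the collection of all geodesics joining x to y. -/
/-!
Along a geodesic `γ` from `x` to `y`, only finitely many parameters are sent to `x` or `y`,
because `γ` is locally injective on the compact interval `[0,1]`. Among the parameter pairs
`a < b` with `γ a = x` and `γ b = y`, take one with `b - a` minimal. Restricted to `[a, b]`, `γ`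
is again a geodesic from `x` to `y`, so `γ ((a + b) / 2) ∈ B`; by minimality this midpoint is
neither `x` nor `y`.
-/

open Filter Topology

namespace IsGeodesicWithSpeed

variable {X : Type*} [MetricSpace X] {γ : ℝ → X} {L : ℝ}

theorem exists_nhds_injOn (hγ : IsGeodesicWithSpeed γ L) {t : ℝ}
    (ht : t ∈ Set.Icc (0:ℝ) 1) : ∃ U ∈ 𝓝 t, Set.InjOn γ (U ∩ Set.Icc 0 1) := by
  obtain ⟨U, hU, hdist⟩ := hγ.2 t ht
  refine ⟨U, hU, fun s hs s' hs' hss' => ?_⟩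
  have h := hdist s hs s' hs'
  rw [hss', dist_self, eq_comm, mul_eq_zero, abs_eq_zero, sub_eq_zero] at h
  exact h.resolve_left hγ.1.ne'

theorem finite_preimage (hγ : IsGeodesicWithSpeed γ L) {F : Set X} (hF : F.Finite) :
    {t ∈ Set.Icc (0:ℝ) 1 | γ t ∈ F}.Finite := by
  have hcodiscrete : {t | γ t ∉ F} ∈ codiscreteWithin (Set.Icc (0:ℝ) 1) := by
    rw [codiscreteWithin_iff_locallyFiniteComplementWithin]
    intro t ht
    obtain ⟨U, hU, hinj⟩ := hγ.exists_nhds_injOn ht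
    refine ⟨U, hU, Set.Finite.of_finite_image (hF.subset ?_) (hinj.mono ?_)⟩
    · rintro _ ⟨s, ⟨-, -, hs⟩, rfl⟩
      simpa using hs
    · exact fun s hs => ⟨hs.1, hs.2.1⟩
  exact (isCompact_Icc.finite_sdiff_of_mem_codiscreteWithin hcodiscrete).subset
    fun t ht => ⟨ht.1, not_not.2 ht.2⟩

theorem comp_affine (hγ : IsGeodesicWithSpeed γ L) {a b : ℝ} (ha : 0 ≤ a) (hab : a < b)
    (hb : b ≤ 1) : IsGeodesicWithSpeed (fun t => γ (a + t * (b - a))) (L * (b - a)) := by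
  obtain ⟨hL, hdist⟩ := hγ
  have hmaps : ∀ s ∈ Set.Icc (0:ℝ) 1, a + s * (b - a) ∈ Set.Icc (0:ℝ) 1 := fun s hs =>
    ⟨by nlinarith [hs.1], by nlinarith [hs.2]⟩
  refine ⟨mul_pos hL (sub_pos.2 hab), fun t ht => ?_⟩
  obtain ⟨U, hU, hUdist⟩ := hdist _ (hmaps t ht)
  have hcont : Continuous fun s : ℝ => a + s * (b - a) := by fun_prop
  refine ⟨_, hcont.continuousAt.preimage_mem_nhds hU, fun s hs s' hs' => ?_⟩
  rw [hUdist _ ⟨hs.1, hmaps s hs.2⟩ _ ⟨hs'.1, hmaps s' hs'.2⟩,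
    show a + s * (b - a) - (a + s' * (b - a)) = (s - s') * (b - a) by ring,
    abs_mul, abs_of_pos (sub_pos.2 hab), mul_comm (|s - s'|), mul_assoc]

end IsGeodesicWithSpeed

namespace MidpointBlocks

variable {X : Type*} [MetricSpace X] {x y : X} {B : Set X}

theorem apply_midpoint_mem (hB : MidpointBlocks x y B) {γ : ℝ → X} {L a b : ℝ}
    (hγ : IsGeodesicWithSpeed γ L) (ha : 0 ≤ a) (hab : a < b) (hb : b ≤ 1)
    (hγa : γ a = x) (hγb : γ b = y) : γ ((a + b) / 2) ∈ B := by
  have h := hB _ ⟨_, hγ.comp_affine ha hab hb⟩ (by simpa using hγa) (by simpa using hγb)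
  convert h using 2
  ring

theorem blocks_sdiff (hB : MidpointBlocks x y B) : Blocks x y (B \ {x, y}) := by
  rintro γ ⟨L, hγ⟩ h0 h1
  set P : Set (ℝ × ℝ) :=
    {p | 0 ≤ p.1 ∧ p.1 < p.2 ∧ p.2 ≤ 1 ∧ γ p.1 = x ∧ γ p.2 = y}
  have hPfin : P.Finite := by
    have hS := hγ.finite_preimage (Set.toFinite {x, y})
    refine (hS.prod hS).subset ?_
    rintro ⟨a, b⟩ ⟨ha, hab, hb, hγa, hγb⟩
    exact ⟨⟨⟨ha, by linarith⟩, by simp [hγa]⟩,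
      ⟨⟨by linarith, hb⟩, by simp [hγb]⟩⟩
  obtain ⟨⟨a, b⟩, ⟨ha, hab, hb, hγa, hγb⟩, hmin⟩ :=
    P.exists_min_image (fun p => p.2 - p.1) hPfin ⟨(0, 1), by simp [P, h0, h1]⟩
  refine ⟨(a + b) / 2, ⟨by linarith, by linarith⟩,
    hB.apply_midpoint_mem hγ ha hab hb hγa hγb, ?_⟩
  rintro (hx | hy)
  · linarith [hmin ((a + b) / 2, b) ⟨by linarith, by linarith, hb, hx, hγb⟩]
  · linarith [hmin (a, (a + b) / 2) ⟨ha, by linarith, by linarith, hγa, hy⟩]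

end MidpointBlocks

/-- A midpoint secure configuration is secure; moreover `B \ {x, y}` is a blocking set
whenever `B` is a finite midpoint blocking set. -/
theorem stmt2 {X : Type*} [MetricSpace X] (x y : X) (B : Set X)
    (hBfin : B.Finite) (hB : MidpointBlocks x y B) :
    Secure x y ∧ Blocks x y (B \ {x, y}) := by
  have hblocks := hB.blocks_sdiff
  exact ⟨⟨B \ {x, y}, hBfin.sdiff, hblocks⟩, hblocks⟩
end

section
/- Let X₁ and X₂ be metric spaces and equip X₁ × X₂ with the ℓ² product metric. If γ : [0,1] → X₁ × X₂ is a geodesic with speed L, and γᵢ = πᵢ ∘ γ denotes its projection to Xᵢ (i = 1, 2), then each γᵢ is either a constant map or a geodesic in Xᵢ with some speed Lᵢ > 0; setting Lᵢ = 0 in the constant case, the speeds satisfy L₁² + L₂² = L², and in particular at least one projection is a (nonconstant) geodesic. -/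
open Metric Set Filter Topology

-- The local condition of `IsGeodesicWithSpeed`, with the speed `r = 0` allowed.
def HasSpeedNear {X : Type*} [PseudoMetricSpace X] (f : ℝ → X) (r t : ℝ) : Prop :=
  ∃ U ∈ 𝓝 t, ∀ s ∈ U ∩ Icc (0:ℝ) 1, ∀ s' ∈ U ∩ Icc (0:ℝ) 1, dist (f s) (f s') = r * |s - s'|

lemma IsPreconnected.eq_of_eventually_eq {α β : Type*} [TopologicalSpace α] {s : Set α}
    (hs : IsPreconnected s) {f : α → β} (h : ∀ x ∈ s, ∀ᶠ y in 𝓝[s] x, f x = f y)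
    {x y : α} (hx : x ∈ s) (hy : y ∈ s) : f x = f y :=
  hs.induction₂ _ h (fun _ _ _ _ _ _ => Eq.trans) (fun _ _ _ _ => Eq.symm) hx hy

lemma exists_ne_mem_Icc_of_mem_nhds {t : ℝ} (ht : t ∈ Icc (0:ℝ) 1) {U : Set ℝ} (hU : U ∈ 𝓝 t) :
    ∃ s ∈ U ∩ Icc (0:ℝ) 1, s ≠ t := by
  rcases ht.2.lt_or_eq with h | rfl
  · obtain ⟨s, hsU, hts, hs1⟩ :=
      Filter.nonempty_of_mem (inter_mem (mem_nhdsWithin_of_mem_nhds hU) (Ioo_mem_nhdsGT h))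
    exact ⟨s, ⟨hsU, ht.1.trans hts.le, hs1.le⟩, hts.ne'⟩
  · obtain ⟨s, hsU, hs0, hs1⟩ :=
      Filter.nonempty_of_mem (inter_mem (mem_nhdsWithin_of_mem_nhds hU) (Ioo_mem_nhdsLT one_pos))
    exact ⟨s, ⟨hsU, hs0.le, hs1.le⟩, hs1.ne⟩

lemma Set.OrdConnected.eq_of_eq_on_subintervals {W : Set ℝ} (hW : W.OrdConnected)
    {σ : ℝ → ℝ → ℝ}
    (h : ∀ p ∈ W, ∀ m ∈ W, ∀ q ∈ W, p < m → m < q → σ p m = σ p q ∧ σ m q = σ p q)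
    {s s' u u' : ℝ} (hs : s ∈ W) (hs' : s' ∈ W) (hu : u ∈ W) (hu' : u' ∈ W)
    (hss' : s < s') (huu' : u < u') : σ s s' = σ u u' := by
  have nested : ∀ {p q x y}, p ∈ W → q ∈ W → p ≤ x → x < y → y ≤ q → σ x y = σ p q := by
    intro p q x y hp hq hpx hxy hyq
    have hx : x ∈ W := hW.out hp hq ⟨hpx, hxy.le.trans hyq⟩
    have hy : y ∈ W := hW.out hp hq ⟨hpx.trans hxy.le, hyq⟩
    have hxq : σ x y = σ x q := by
      rcases hyq.eq_or_lt with rfl | hyq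
      · rfl
      · exact (h x hx y hy q hq hxy hyq).1
    rcases hpx.eq_or_lt with rfl | hpx
    · exact hxq
    · exact hxq.trans (h p hp x hx q hq hpx (hxy.trans_le hyq)).2
  have hmin : min s u ∈ W := by rcases min_choice s u with h | h <;> rw [h] <;> assumption
  have hmax : max s' u' ∈ W := by rcases max_choice s' u' with h | h <;> rw [h] <;> assumption
  exact (nested hmin hmax (min_le_left _ _) hss' (le_max_left _ _)).trans
    (nested hmin hmax (min_le_right _ _) huu' (le_max_right _ _)).symm

section HasSpeedNear

variable {X Y : Type*} [PseudoMetricSpace X] [PseudoMetricSpace Y] {f : ℝ → X} {r r' t : ℝ}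

lemma HasSpeedNear.eventually (h : HasSpeedNear f r t) : ∀ᶠ u in 𝓝 t, HasSpeedNear f r u := by
  obtain ⟨U, hU, hf⟩ := h
  filter_upwards [eventually_mem_nhds_iff.2 hU] with u hu
  exact ⟨U, hu, hf⟩

lemma HasSpeedNear.le {g : ℝ → Y} (ht : t ∈ Icc (0:ℝ) 1) (hf : HasSpeedNear f r t)
    (hg : HasSpeedNear g r' t) (hfg : ∀ s s', dist (f s) (f s') ≤ dist (g s) (g s')) :
    r ≤ r' := by
  obtain ⟨U, hU, hfU⟩ := hf
  obtain ⟨V, hV, hgV⟩ := hg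
  obtain ⟨s, ⟨⟨hsU, hsV⟩, hs⟩, hst⟩ := exists_ne_mem_Icc_of_mem_nhds ht (inter_mem hU hV)
  refine le_of_mul_le_mul_right ?_ (abs_pos.2 (sub_ne_zero.2 hst))
  rw [← hfU s ⟨hsU, hs⟩ t ⟨mem_of_mem_nhds hU, ht⟩, ← hgV s ⟨hsV, hs⟩ t ⟨mem_of_mem_nhds hV, ht⟩]
  exact hfg s t

lemma HasSpeedNear.nonneg (ht : t ∈ Icc (0:ℝ) 1) (hf : HasSpeedNear f r t) : 0 ≤ r :=
  HasSpeedNear.le (f := fun _ => f t) ht ⟨univ, univ_mem, by simp⟩ hf fun _ _ => by simp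

lemma HasSpeedNear.unique (ht : t ∈ Icc (0:ℝ) 1) (h : HasSpeedNear f r t)
    (h' : HasSpeedNear f r' t) : r = r' :=
  (h.le ht h' fun _ _ => le_rfl).antisymm (h'.le ht h fun _ _ => le_rfl)

lemma exists_speed_of_forall_hasSpeedNear (h : ∀ t ∈ Icc (0:ℝ) 1, ∃ r, HasSpeedNear f r t) :
    ∃ r, ∀ t ∈ Icc (0:ℝ) 1, HasSpeedNear f r t := by
  choose! r hr using h
  have h0 : (0:ℝ) ∈ Icc (0:ℝ) 1 := left_mem_Icc.2 zero_le_one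
  have hconst : ∀ t ∈ Icc (0:ℝ) 1, r t = r 0 := fun t ht =>
    isPreconnected_Icc.eq_of_eventually_eq (fun u hu => by
      filter_upwards [nhdsWithin_le_nhds (hr u hu).eventually, self_mem_nhdsWithin] with v hv hvI
      exact hv.unique hvI (hr v hvI)) ht h0
  exact ⟨r 0, fun t ht => hconst t ht ▸ hr t ht⟩

end HasSpeedNear

lemma eq_of_forall_hasSpeedNear_zero {X : Type*} [MetricSpace X] {f : ℝ → X}
    (h : ∀ t ∈ Icc (0:ℝ) 1, HasSpeedNear f 0 t) :
    ∀ s ∈ Icc (0:ℝ) 1, ∀ s' ∈ Icc (0:ℝ) 1, f s = f s' := by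
  refine fun s hs s' hs' => isPreconnected_Icc.eq_of_eventually_eq (fun t ht => ?_) hs hs'
  obtain ⟨U, hU, hf⟩ := h t ht
  filter_upwards [inter_mem_nhdsWithin _ hU] with u hu
  simpa using hf t ⟨mem_of_mem_nhds hU, ht⟩ u ⟨hu.2, hu.1⟩

lemma eq_zero_and_const_or_isGeodesicWithSpeed {X : Type*} [MetricSpace X] {f : ℝ → X} {r : ℝ}
    (hr : 0 ≤ r) (h : ∀ t ∈ Icc (0:ℝ) 1, HasSpeedNear f r t) :
    (r = 0 ∧ ∀ s ∈ Icc (0:ℝ) 1, ∀ s' ∈ Icc (0:ℝ) 1, f s = f s') ∨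
      (0 < r ∧ IsGeodesicWithSpeed f r) := by
  rcases hr.eq_or_lt with rfl | hr
  · exact Or.inl ⟨rfl, eq_of_forall_hasSpeedNear_zero h⟩
  · exact Or.inr ⟨hr, hr, h⟩

-- Equality case of Minkowski's inequality for nonnegative vectors `(a, b)`, `(c, e)` of `ℝ²`.
lemma eq_add_and_mul_eq_of_sq_add_sq_eq {a b c e A B p q : ℝ} (ha : 0 ≤ a) (hc : 0 ≤ c)
    (hA : 0 ≤ A) (hB : 0 ≤ B) (hp : 0 ≤ p) (hq : 0 ≤ q)
    (hab : a ^ 2 + b ^ 2 = p ^ 2) (hce : c ^ 2 + e ^ 2 = q ^ 2) (hAB : A ^ 2 + B ^ 2 = (p + q) ^ 2)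
    (hAac : A ≤ a + c) (hBbe : B ≤ b + e) : A = a + c ∧ a * q = c * p := by
  have lagrange : (p * q) ^ 2 = (a * c + b * e) ^ 2 + (a * e - b * c) ^ 2 := by
    linear_combination (-(c ^ 2 + e ^ 2)) * hab - p ^ 2 * hce
  have hcs : a * c + b * e ≤ p * q :=
    abs_le_of_sq_le_sq' (by nlinarith [sq_nonneg (a * e - b * c)]) (mul_nonneg hp hq) |>.2
  have hA2 := pow_le_pow_left₀ hA hAac 2
  have hB2 := pow_le_pow_left₀ hB hBbe 2
  have hcs_eq : a * c + b * e = p * q := by nlinarith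
  have hcross : a * e = b * c := by
    have : (a * e - b * c) ^ 2 = 0 := by nlinarith
    linarith [pow_eq_zero_iff (n := 2) two_ne_zero |>.1 this]
  refine ⟨(sq_eq_sq₀ hA (hA.trans hAac)).1 (by nlinarith),
    (sq_eq_sq₀ (mul_nonneg ha hq) (mul_nonneg hc hp)).1 ?_⟩
  linear_combination (-a ^ 2) * hce + c ^ 2 * hab + (a * e + b * c) * hcross

section L2Product

variable {X₁ X₂ : Type*}

lemma WithLp.prod_dist_sq_eq_of_L2 [PseudoMetricSpace X₁] [PseudoMetricSpace X₂]
    (x y : WithLp 2 (X₁ × X₂)) : dist x y ^ 2 = dist x.fst y.fst ^ 2 + dist x.snd y.snd ^ 2 := by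
  rw [WithLp.prod_dist_eq_add (by norm_num), ENNReal.toReal_ofNat, Real.rpow_two, Real.rpow_two,
    ← Real.sqrt_eq_rpow, Real.sq_sqrt (by positivity)]

lemma WithLp.prod_dist_fst_eq_add_of_dist_eq_add [PseudoMetricSpace X₁] [PseudoMetricSpace X₂]
    {x y z : WithLp 2 (X₁ × X₂)} (h : dist x z = dist x y + dist y z) :
    dist x.fst z.fst = dist x.fst y.fst + dist y.fst z.fst ∧
      dist x.fst y.fst * dist y z = dist y.fst z.fst * dist x y :=
  eq_add_and_mul_eq_of_sq_add_sq_eq dist_nonneg dist_nonneg dist_nonneg dist_nonneg dist_nonneg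
    dist_nonneg (prod_dist_sq_eq_of_L2 x y).symm (prod_dist_sq_eq_of_L2 y z).symm
    (by rw [← h, prod_dist_sq_eq_of_L2]) (dist_triangle _ _ _) (dist_triangle _ _ _)

variable [MetricSpace X₁] [MetricSpace X₂] {γ : ℝ → WithLp 2 (X₁ × X₂)} {L r t : ℝ}

lemma HasSpeedNear.exists_fst (hL : 0 < L) (ht : t ∈ Icc (0:ℝ) 1) (hγ : HasSpeedNear γ L t) :
    ∃ r, HasSpeedNear (fun s => (γ s).fst) r t := by
  obtain ⟨U, hU, hγU⟩ := hγ
  obtain ⟨ε, hε, hεU⟩ := Metric.mem_nhds_iff.mp hU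
  set W := ball t ε ∩ Icc (0:ℝ) 1
  have hW : W.OrdConnected := ((convex_ball t ε).inter (convex_Icc 0 1)).ordConnected
  have hγW : ∀ s ∈ W, ∀ s' ∈ W, s < s' → dist (γ s) (γ s') = L * (s' - s) := by
    intro s hs s' hs' h
    rw [hγU s ⟨hεU hs.1, hs.2⟩ s' ⟨hεU hs'.1, hs'.2⟩, abs_sub_comm, abs_of_pos (sub_pos.2 h)]
  let σ s s' := dist (γ s).fst (γ s').fst / (s' - s)
  have hσ : ∀ p ∈ W, ∀ m ∈ W, ∀ q ∈ W, p < m → m < q → σ p m = σ p q ∧ σ m q = σ p q := by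
    intro p hp m hm q hq hpm hmq
    obtain ⟨hadd, hprop⟩ := WithLp.prod_dist_fst_eq_add_of_dist_eq_add
      (x := γ p) (y := γ m) (z := γ q) (by
        rw [hγW p hp q hq (hpm.trans hmq), hγW p hp m hm hpm, hγW m hm q hq hmq]; ring)
    rw [hγW p hp m hm hpm, hγW m hm q hq hmq] at hprop
    have hsplit : dist (γ p).fst (γ m).fst * (q - m) = dist (γ m).fst (γ q).fst * (m - p) :=
      mul_left_cancel₀ hL.ne' (by linear_combination hprop)
    simp only [σ]
    rw [div_eq_div_iff (by linarith) (by linarith), div_eq_div_iff (by linarith) (by linarith),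
      hadd]
    exact ⟨by linear_combination hsplit, by linear_combination -hsplit⟩
  have htW : t ∈ W := ⟨mem_ball_self hε, ht⟩
  obtain ⟨a, haW, hat⟩ := exists_ne_mem_Icc_of_mem_nhds ht (ball_mem_nhds t hε)
  have hmin : min a t ∈ W := by rcases min_choice a t with h | h <;> rw [h] <;> assumption
  have hmax : max a t ∈ W := by rcases max_choice a t with h | h <;> rw [h] <;> assumption
  have key : ∀ s ∈ W, ∀ s' ∈ W, s < s' →
      dist (γ s).fst (γ s').fst = σ (min a t) (max a t) * (s' - s) := by
    intro s hs s' hs' h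
    rw [← hW.eq_of_eq_on_subintervals hσ hs hs' hmin hmax h (min_lt_max.2 hat),
      div_mul_cancel₀ _ (sub_ne_zero.2 h.ne')]
  refine ⟨σ (min a t) (max a t), ball t ε, ball_mem_nhds t hε, fun s hs s' hs' => ?_⟩
  rcases lt_trichotomy s s' with h | rfl | h
  · rw [key s hs s' hs' h, abs_sub_comm, abs_of_pos (sub_pos.2 h)]
  · simp
  · rw [dist_comm, key s' hs' s hs h, abs_of_pos (sub_pos.2 h)]

lemma HasSpeedNear.snd_of_fst (hγ : HasSpeedNear γ L t)
    (h₁ : HasSpeedNear (fun s => (γ s).fst) r t) :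
    HasSpeedNear (fun s => (γ s).snd) √(L ^ 2 - r ^ 2) t := by
  obtain ⟨U, hU, hγU⟩ := hγ
  obtain ⟨V, hV, h₁V⟩ := h₁
  refine ⟨U ∩ V, inter_mem hU hV, fun s hs s' hs' => ?_⟩
  have hpyth := WithLp.prod_dist_sq_eq_of_L2 (γ s) (γ s')
  rw [hγU s ⟨hs.1.1, hs.2⟩ s' ⟨hs'.1.1, hs'.2⟩, h₁V s ⟨hs.1.2, hs.2⟩ s' ⟨hs'.1.2, hs'.2⟩] at hpyth
  calc dist (γ s).snd (γ s').snd = √(dist (γ s).snd (γ s').snd ^ 2) :=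
        (Real.sqrt_sq dist_nonneg).symm
    _ = √((L ^ 2 - r ^ 2) * (s - s') ^ 2) := by
        congr 1
        linear_combination -hpyth + (L ^ 2 - r ^ 2) * sq_abs (s - s')
    _ = √(L ^ 2 - r ^ 2) * |s - s'| := by rw [Real.sqrt_mul' _ (sq_nonneg _), Real.sqrt_sq_eq_abs]

end L2Product

/-- The projections of a geodesic in an ℓ² product are each either constant (on `[0,1]`)
or a geodesic; the speeds (with `0` for constant projections) satisfy `L₁² + L₂² = L²`,
and at least one projection is a (nonconstant) geodesic. -/
theorem stmt4 {X₁ X₂ : Type*} [MetricSpace X₁] [MetricSpace X₂]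
    (γ : ℝ → WithLp 2 (X₁ × X₂)) (L : ℝ) (hγ : IsGeodesicWithSpeed γ L) :
    ∃ L₁ L₂ : ℝ, 0 ≤ L₁ ∧ 0 ≤ L₂ ∧
      ((L₁ = 0 ∧ ∀ s ∈ Set.Icc (0:ℝ) 1, ∀ s' ∈ Set.Icc (0:ℝ) 1,
          (WithLp.equiv 2 (X₁ × X₂) (γ s)).1 = (WithLp.equiv 2 (X₁ × X₂) (γ s')).1) ∨
        (0 < L₁ ∧ IsGeodesicWithSpeed (fun t => (WithLp.equiv 2 (X₁ × X₂) (γ t)).1) L₁)) ∧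
      ((L₂ = 0 ∧ ∀ s ∈ Set.Icc (0:ℝ) 1, ∀ s' ∈ Set.Icc (0:ℝ) 1,
          (WithLp.equiv 2 (X₁ × X₂) (γ s)).2 = (WithLp.equiv 2 (X₁ × X₂) (γ s')).2) ∨
        (0 < L₂ ∧ IsGeodesicWithSpeed (fun t => (WithLp.equiv 2 (X₁ × X₂) (γ t)).2) L₂)) ∧
      L₁ ^ 2 + L₂ ^ 2 = L ^ 2 ∧
      (IsGeodesic (fun t => (WithLp.equiv 2 (X₁ × X₂) (γ t)).1) ∨
        IsGeodesic (fun t => (WithLp.equiv 2 (X₁ × X₂) (γ t)).2)) := by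
  obtain ⟨hL, hγ⟩ : 0 < L ∧ ∀ t ∈ Icc (0:ℝ) 1, HasSpeedNear γ L t := hγ
  have h0 : (0:ℝ) ∈ Icc (0:ℝ) 1 := left_mem_Icc.2 zero_le_one
  obtain ⟨L₁, hL₁⟩ := exists_speed_of_forall_hasSpeedNear fun t ht => (hγ t ht).exists_fst hL ht
  have hL₂ : ∀ t ∈ Icc (0:ℝ) 1, HasSpeedNear (fun s => (γ s).snd) √(L ^ 2 - L₁ ^ 2) t :=
    fun t ht => (hγ t ht).snd_of_fst (hL₁ t ht)
  have hL₁0 : 0 ≤ L₁ := (hL₁ 0 h0).nonneg h0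
  have hL₁L : L₁ ≤ L := (hL₁ 0 h0).le h0 (hγ 0 h0) fun s s' => WithLp.dist_fst_le (γ s) (γ s')
  have hsq : L₁ ^ 2 + √(L ^ 2 - L₁ ^ 2) ^ 2 = L ^ 2 := by
    rw [Real.sq_sqrt (by nlinarith)]; ring
  have dich₁ := eq_zero_and_const_or_isGeodesicWithSpeed hL₁0 hL₁
  have dich₂ := eq_zero_and_const_or_isGeodesicWithSpeed (Real.sqrt_nonneg _) hL₂
  refine ⟨L₁, _, hL₁0, Real.sqrt_nonneg _, dich₁, dich₂, hsq, ?_⟩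
  rcases dich₁ with ⟨h₁, -⟩ | ⟨-, h₁⟩
  · rcases dich₂ with ⟨h₂, -⟩ | ⟨-, h₂⟩
    · rw [h₂, h₁] at hsq
      nlinarith
    · exact Or.inr ⟨_, h₂⟩
  · exact Or.inl ⟨_, h₁⟩
end

section
/- Let X₁ and X₂ be metric spaces, equip X₁ × X₂ with the ℓ² product metric, and let x = (x₁, x₂), y = (y₁, y₂) ∈ X₁ × X₂. Assume that either x₂ = y₂ or there exists a geodesic in X₂ joining x₂ to y₂. If the configuration (x, y) is secure in X₁ × X₂ with finite blocking set B, then the configuration (x₁, y₁) is secure in X₁; moreover the finite set π₁(B) ∖ {x₁, y₁} blocks every geodesic joining x₁ to y₁ none of whose interior points lies in {x₁, y₁}. -/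
/-- If a configuration in an ℓ² product is secure with finite blocking set `B`, and the
second coordinates are equal or joined by some geodesic, then the projected configuration
in the first factor is secure; moreover `π₁(B) \ {x₁, y₁}` blocks every geodesic joining
`x₁` to `y₁` none of whose interior points lies in `{x₁, y₁}`. -/
theorem stmt5 {X₁ X₂ : Type*} [MetricSpace X₁] [MetricSpace X₂]
    (x₁ y₁ : X₁) (x₂ y₂ : X₂)
    (hjoin : x₂ = y₂ ∨ ∃ σ : ℝ → X₂, IsGeodesic σ ∧ σ 0 = x₂ ∧ σ 1 = y₂)
    (B : Set (WithLp 2 (X₁ × X₂))) (hBfin : B.Finite)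
    (hB : Blocks ((WithLp.equiv 2 (X₁ × X₂)).symm (x₁, x₂))
      ((WithLp.equiv 2 (X₁ × X₂)).symm (y₁, y₂)) B) :
    Secure x₁ y₁ ∧
    ∀ γ₁ : ℝ → X₁, IsGeodesic γ₁ → γ₁ 0 = x₁ → γ₁ 1 = y₁ →
      (∀ t ∈ Set.Ioo (0:ℝ) 1, γ₁ t ∉ ({x₁, y₁} : Set X₁)) →
      ∃ t ∈ Set.Ioo (0:ℝ) 1,
        γ₁ t ∈ ((fun z => (WithLp.equiv 2 (X₁ × X₂) z).1) '' B) \ {x₁, y₁} := by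
  obtain ⟨σ, L₂, hL₂, hσ0, hσ1, hσloc⟩ :
      ∃ (σ : ℝ → X₂) (L₂ : ℝ), 0 ≤ L₂ ∧ σ 0 = x₂ ∧ σ 1 = y₂ ∧
        ∀ t ∈ Set.Icc (0:ℝ) 1, ∃ U ∈ nhds t,
          ∀ s ∈ U ∩ Set.Icc (0:ℝ) 1, ∀ s' ∈ U ∩ Set.Icc (0:ℝ) 1,
            dist (σ s) (σ s') = L₂ * |s - s'| := by
    rcases hjoin with h | ⟨σ, ⟨L₂, hL₂pos, hloc⟩, h0, h1⟩
    · exact ⟨fun _ => x₂, 0, le_refl 0, rfl, h, fun t _ =>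
        ⟨Set.univ, Filter.univ_mem, by simp⟩⟩
    · exact ⟨σ, L₂, hL₂pos.le, h0, h1, hloc⟩
  have key : ∀ γ₁ : ℝ → X₁, IsGeodesic γ₁ → γ₁ 0 = x₁ → γ₁ 1 = y₁ →
      ∃ t ∈ Set.Ioo (0:ℝ) 1,
        γ₁ t ∈ ((fun z => (WithLp.equiv 2 (X₁ × X₂) z).1) '' B) := by
    rintro γ₁ ⟨L₁, hL₁pos, hloc₁⟩ h0 h1
    set γ : ℝ → WithLp 2 (X₁ × X₂) :=
      fun t => (WithLp.equiv 2 (X₁ × X₂)).symm (γ₁ t, σ t) with hγ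
    have hLpos : 0 < Real.sqrt (L₁ ^ 2 + L₂ ^ 2) := by
      apply Real.sqrt_pos.mpr; positivity
    have hgeo : IsGeodesic γ := by
      refine ⟨Real.sqrt (L₁ ^ 2 + L₂ ^ 2), hLpos, ?_⟩
      intro t ht
      obtain ⟨U₁, hU₁, h₁⟩ := hloc₁ t ht
      obtain ⟨U₂, hU₂, h₂⟩ := hσloc t ht
      refine ⟨U₁ ∩ U₂, Filter.inter_mem hU₁ hU₂, ?_⟩
      intro s hs s' hs'
      have hs1 : s ∈ U₁ ∩ Set.Icc (0:ℝ) 1 := ⟨hs.1.1, hs.2⟩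
      have hs2 : s ∈ U₂ ∩ Set.Icc (0:ℝ) 1 := ⟨hs.1.2, hs.2⟩
      have hs'1 : s' ∈ U₁ ∩ Set.Icc (0:ℝ) 1 := ⟨hs'.1.1, hs'.2⟩
      have hs'2 : s' ∈ U₂ ∩ Set.Icc (0:ℝ) 1 := ⟨hs'.1.2, hs'.2⟩
      have hd : dist (γ s) (γ s') =
          (dist (γ₁ s) (γ₁ s') ^ (2:ℝ) + dist (σ s) (σ s') ^ (2:ℝ)) ^ ((1:ℝ) / 2) := by
        have h2 : ((2:ENNReal)).toReal = (2:ℝ) := by norm_num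
        have := WithLp.prod_dist_eq_add (p := 2) (α := X₁) (β := X₂)
          (by norm_num) (γ s) (γ s')
        rw [h2] at this
        exact this
      rw [hd, h₁ s hs1 s' hs'1, h₂ s hs2 s' hs'2]
      rw [show ((L₁ * |s - s'|) ^ (2:ℝ) + (L₂ * |s - s'|) ^ (2:ℝ))
          = (L₁ ^ 2 + L₂ ^ 2) * |s - s'| ^ 2 by
        rw [show (2:ℝ) = ((2:ℕ):ℝ) by norm_num, Real.rpow_natCast, Real.rpow_natCast]; ring]
      rw [← Real.sqrt_eq_rpow, Real.sqrt_mul (by positivity), Real.sqrt_sq_eq_abs,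
        abs_abs]
    obtain ⟨t, ht, hmem⟩ := hB γ hgeo (by simp [hγ, h0, hσ0]) (by simp [hγ, h1, hσ1])
    exact ⟨t, ht, ⟨γ t, hmem, rfl⟩⟩
  constructor
  · refine ⟨((fun z => (WithLp.equiv 2 (X₁ × X₂) z).1) '' B) ∪ {x₁, y₁},
      (hBfin.image _).union ((Set.finite_singleton y₁).insert x₁), ?_⟩
    intro γ₁ hg h0 h1
    by_cases hcase : ∃ t ∈ Set.Ioo (0:ℝ) 1, γ₁ t ∈ ({x₁, y₁} : Set X₁)
    · obtain ⟨t, ht, hmem⟩ := hcase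
      exact ⟨t, ht, Or.inr hmem⟩
    · obtain ⟨t, ht, hmem⟩ := key γ₁ hg h0 h1
      exact ⟨t, ht, Or.inl hmem⟩
  · intro γ₁ hg h0 h1 havoid
    obtain ⟨t, ht, hmem⟩ := key γ₁ hg h0 h1
    exact ⟨t, ht, hmem, havoid t ht⟩
end

section
/- Let X₁ and X₂ be metric spaces, equip X₁ × X₂ with the ℓ² product metric, and let x = (x₁, x₂), y = (y₁, y₂) ∈ X₁ × X₂. Assume that either x₂ = y₂ or there exists a geodesic in X₂ joining x₂ to y₂. If the configuration (x, y) is midpoint secure in X₁ × X₂ with finite midpoint blocking set B, then the configuration (x₁, y₁) is midpoint secure in X₁, with midpoint blocking set π₁(B). -/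
private lemma l2dist_aux {X₁ X₂ : Type*} [MetricSpace X₁] [MetricSpace X₂]
    (a b : WithLp 2 (X₁ × X₂)) :
    dist a b = Real.sqrt (dist a.fst b.fst ^ 2 + dist a.snd b.snd ^ 2) := by
  rw [WithLp.prod_dist_eq_add (by norm_num : (0:ℝ) < ENNReal.toReal 2)]
  rw [show ENNReal.toReal 2 = ((2:ℕ):ℝ) by norm_num]
  rw [Real.rpow_natCast, Real.rpow_natCast, Real.sqrt_eq_rpow]
  norm_num

/-- Product of a geodesic in the first factor with a "geodesic of nonnegative speed"
(possibly constant) in the second factor is a geodesic in the ℓ² product. -/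
private lemma prod_geodesic_aux {X₁ X₂ : Type*} [MetricSpace X₁] [MetricSpace X₂]
    (γ : ℝ → X₁) (σ : ℝ → X₂) (L₁ L₂ : ℝ) (hL₁ : 0 < L₁) (hL₂ : 0 ≤ L₂)
    (h₁ : ∀ t ∈ Set.Icc (0:ℝ) 1, ∃ U ∈ nhds t,
      ∀ s ∈ U ∩ Set.Icc (0:ℝ) 1, ∀ s' ∈ U ∩ Set.Icc (0:ℝ) 1,
        dist (γ s) (γ s') = L₁ * |s - s'|)
    (h₂ : ∀ t ∈ Set.Icc (0:ℝ) 1, ∃ U ∈ nhds t,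
      ∀ s ∈ U ∩ Set.Icc (0:ℝ) 1, ∀ s' ∈ U ∩ Set.Icc (0:ℝ) 1,
        dist (σ s) (σ s') = L₂ * |s - s'|) :
    IsGeodesic (fun t => (WithLp.equiv 2 (X₁ × X₂)).symm (γ t, σ t)) := by
  refine ⟨Real.sqrt (L₁ ^ 2 + L₂ ^ 2), ?_, ?_⟩
  · exact Real.sqrt_pos.mpr (by positivity)
  · intro t ht
    obtain ⟨U₁, hU₁, H₁⟩ := h₁ t ht
    obtain ⟨U₂, hU₂, H₂⟩ := h₂ t ht
    refine ⟨U₁ ∩ U₂, Filter.inter_mem hU₁ hU₂, ?_⟩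
    rintro s ⟨⟨hs1, hs2⟩, hs⟩ s' ⟨⟨hs1', hs2'⟩, hs'⟩
    rw [l2dist_aux]
    have e1 : dist (γ s) (γ s') = L₁ * |s - s'| := H₁ s ⟨hs1, hs⟩ s' ⟨hs1', hs'⟩
    have e2 : dist (σ s) (σ s') = L₂ * |s - s'| := H₂ s ⟨hs2, hs⟩ s' ⟨hs2', hs'⟩
    have : dist ((WithLp.equiv 2 (X₁ × X₂)).symm (γ s, σ s)).fst
        ((WithLp.equiv 2 (X₁ × X₂)).symm (γ s', σ s')).fst = L₁ * |s - s'| := e1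
    rw [this]
    have : dist ((WithLp.equiv 2 (X₁ × X₂)).symm (γ s, σ s)).snd
        ((WithLp.equiv 2 (X₁ × X₂)).symm (γ s', σ s')).snd = L₂ * |s - s'| := e2
    rw [this]
    have habs : (0:ℝ) ≤ |s - s'| := abs_nonneg _
    rw [mul_pow, mul_pow, ← add_mul, Real.sqrt_mul (by positivity), Real.sqrt_sq habs]


/-- If a configuration in an ℓ² product is midpoint secure with finite midpoint blocking
set `B`, and the second coordinates are equal or joined by some geodesic, then the
projected configuration in the first factor is midpoint secure with midpoint blocking
set `π₁(B)`. -/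
theorem stmt6 {X₁ X₂ : Type*} [MetricSpace X₁] [MetricSpace X₂]
    (x₁ y₁ : X₁) (x₂ y₂ : X₂)
    (hjoin : x₂ = y₂ ∨ ∃ σ : ℝ → X₂, IsGeodesic σ ∧ σ 0 = x₂ ∧ σ 1 = y₂)
    (B : Set (WithLp 2 (X₁ × X₂))) (hBfin : B.Finite)
    (hB : MidpointBlocks ((WithLp.equiv 2 (X₁ × X₂)).symm (x₁, x₂))
      ((WithLp.equiv 2 (X₁ × X₂)).symm (y₁, y₂)) B) :
    MidpointSecure x₁ y₁ ∧
    MidpointBlocks x₁ y₁ ((fun z => (WithLp.equiv 2 (X₁ × X₂) z).1) '' B) := by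
  have key : MidpointBlocks x₁ y₁ ((fun z => (WithLp.equiv 2 (X₁ × X₂) z).1) '' B) := by
    intro γ hγ hγ0 hγ1
    obtain ⟨L₁, hL₁, h₁⟩ := hγ
    obtain ⟨σ, L₂, hL₂, h₂, hσ0, hσ1⟩ :
        ∃ σ : ℝ → X₂, ∃ L₂ : ℝ, 0 ≤ L₂ ∧
          (∀ t ∈ Set.Icc (0:ℝ) 1, ∃ U ∈ nhds t,
            ∀ s ∈ U ∩ Set.Icc (0:ℝ) 1, ∀ s' ∈ U ∩ Set.Icc (0:ℝ) 1,
              dist (σ s) (σ s') = L₂ * |s - s'|) ∧ σ 0 = x₂ ∧ σ 1 = y₂ := by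
      rcases hjoin with h | ⟨σ, ⟨L₂, hL₂, h₂⟩, hσ0, hσ1⟩
      · exact ⟨fun _ => x₂, 0, le_refl 0,
          fun t ht => ⟨Set.univ, Filter.univ_mem, fun s _ s' _ => by simp⟩, rfl, h.symm ▸ rfl⟩
      · exact ⟨σ, L₂, hL₂.le, h₂, hσ0, hσ1⟩
    have hΓ := prod_geodesic_aux γ σ L₁ L₂ hL₁ hL₂ h₁ h₂
    have hmem := hB _ hΓ (by simp [hγ0, hσ0]) (by simp [hγ1, hσ1])
    exact ⟨_, hmem, rfl⟩
  exact ⟨⟨_, hBfin.image _, key⟩, key⟩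
end

section
/- Let X₁ and X₂ be metric spaces and equip X₁ × X₂ with the ℓ² product metric. Let (x₁, y₁) be a midpoint secure configuration in X₁ with finite midpoint blocking set B₁, and let (x₂, y₂) be a midpoint secure configuration in X₂ with finite midpoint blocking set B₂. Then the configuration ((x₁, x₂), (y₁, y₂)) is midpoint secure in X₁ × X₂, with finite midpoint blocking set (B₁ ∪ {x₁}) × (B₂ ∪ {x₂}). -/
/-!
Write `γ = (γ₁, γ₂)` for a geodesic of speed `L` in the `ℓ²` product. On a piece of `[0,1]` where
`γ` is an `L`-isometry, the triangle inequalities in both factors, squared and added, must hold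
with equality; the equality case of Minkowski's inequality in `ℝ²` forces each `γᵢ` to be
additive along three points, with proportional increments. Hence each `γᵢ` has, locally, a
constant speed `cᵢ ≥ 0`, and since `[0,1]` is connected this speed is the same everywhere. If
`cᵢ > 0`, then `γᵢ` is a geodesic from `xᵢ` to `yᵢ`, so `γᵢ (1/2) ∈ Bᵢ`; if `cᵢ = 0`, then `γᵢ`
is constant, so `γᵢ (1/2) = xᵢ`.
-/

open Set Filter Topology

theorem WithLp.prod_dist_sq_eq {X₁ X₂ : Type*} [MetricSpace X₁] [MetricSpace X₂]
    (f g : WithLp 2 (X₁ × X₂)) :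
    dist f g ^ 2 = dist f.fst g.fst ^ 2 + dist f.snd g.snd ^ 2 := by
  rw [WithLp.prod_dist_eq_add (by norm_num), ENNReal.toReal_ofNat, ← Real.rpow_natCast,
    ← Real.rpow_mul (by positivity)]
  norm_num

/-- Equality case of Minkowski's inequality: if `(w₁, w₂) ≤ (u₁ + v₁, u₂ + v₂)` componentwise and
`‖w‖ = ‖u‖ + ‖v‖` for the Euclidean norm, then `w₁ = u₁ + v₁` and `u` and `v` are proportional. -/
theorem eq_add_and_mul_eq_of_sq_add_sq {u₁ u₂ v₁ v₂ w₁ w₂ p q : ℝ}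
    (hw₁ : 0 ≤ w₁) (hw₂ : 0 ≤ w₂) (hp : 0 ≤ p) (hq : 0 ≤ q)
    (hu : u₁ ^ 2 + u₂ ^ 2 = p ^ 2) (hv : v₁ ^ 2 + v₂ ^ 2 = q ^ 2)
    (hw : w₁ ^ 2 + w₂ ^ 2 = (p + q) ^ 2) (h₁ : w₁ ≤ u₁ + v₁) (h₂ : w₂ ≤ u₂ + v₂) :
    w₁ = u₁ + v₁ ∧ u₁ * q = v₁ * p := by
  have hw₁' : w₁ ^ 2 ≤ (u₁ + v₁) ^ 2 := pow_le_pow_left₀ hw₁ h₁ 2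
  have hw₂' : w₂ ^ 2 ≤ (u₂ + v₂) ^ 2 := pow_le_pow_left₀ hw₂ h₂ 2
  have hinner : u₁ * v₁ + u₂ * v₂ = p * q := by
    nlinarith [sq_nonneg (u₁ * v₂ - u₂ * v₁), mul_nonneg hp hq]
  have hsum : (u₁ * q - v₁ * p) ^ 2 + (u₂ * q - v₂ * p) ^ 2 = 0 := by
    linear_combination q ^ 2 * hu + p ^ 2 * hv - 2 * p * q * hinner
  refine ⟨?_, by nlinarith [sq_nonneg (u₁ * q - v₁ * p), sq_nonneg (u₂ * q - v₂ * p)]⟩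
  nlinarith [sq_nonneg (u₁ * q - v₁ * p), sq_nonneg (u₂ * q - v₂ * p)]

section Slope

variable {X : Type*} [MetricSpace X] {f : ℝ → X} {V : Set ℝ}

theorem slope_eq_of_le_of_three_point
    (h : ∀ a ∈ V, ∀ b ∈ V, ∀ c ∈ V, a < b → b < c →
      dist (f a) (f b) / (b - a) = dist (f a) (f c) / (c - a) ∧
      dist (f b) (f c) / (c - b) = dist (f a) (f c) / (c - a))
    {a u v b : ℝ} (ha : a ∈ V) (hu : u ∈ V) (hv : v ∈ V) (hb : b ∈ V)
    (hau : a ≤ u) (huv : u < v) (hvb : v ≤ b) :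
    dist (f u) (f v) / (v - u) = dist (f a) (f b) / (b - a) := by
  have hleft : dist (f u) (f v) / (v - u) = dist (f a) (f v) / (v - a) := by
    rcases hau.eq_or_lt with rfl | hau
    · rfl
    · exact (h a ha u hu v hv hau huv).2
  have hright : dist (f a) (f v) / (v - a) = dist (f a) (f b) / (b - a) := by
    rcases hvb.eq_or_lt with rfl | hvb
    · rfl
    · exact (h a ha v hv b hb (hau.trans_lt huv) hvb).1
  rw [hleft, hright]

theorem exists_dist_eq_mul_abs_of_three_point
    (h : ∀ a ∈ V, ∀ b ∈ V, ∀ c ∈ V, a < b → b < c →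
      dist (f a) (f b) / (b - a) = dist (f a) (f c) / (c - a) ∧
      dist (f b) (f c) / (c - b) = dist (f a) (f c) / (c - a)) :
    ∃ c, ∀ s ∈ V, ∀ s' ∈ V, dist (f s) (f s') = c * |s - s'| := by
  by_cases hV : ∃ p ∈ V, ∃ q ∈ V, p < q
  · obtain ⟨p, hp, q, hq, hpq⟩ := hV
    refine ⟨dist (f p) (f q) / (q - p), ?_⟩
    have hlt : ∀ s ∈ V, ∀ s' ∈ V, s < s' →
        dist (f s) (f s') = dist (f p) (f q) / (q - p) * |s - s'| := by
      intro s hs s' hs' hss'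
      have hmin : min s p ∈ V := by rcases min_choice s p with h | h <;> rw [h] <;> assumption
      have hmax : max s' q ∈ V := by rcases max_choice s' q with h | h <;> rw [h] <;> assumption
      have hslope := (slope_eq_of_le_of_three_point h hmin hs hs' hmax (min_le_left _ _) hss'
        (le_max_left _ _)).trans (slope_eq_of_le_of_three_point h hmin hp hq hmax
          (min_le_right _ _) hpq (le_max_right _ _)).symm
      rw [← hslope, abs_sub_comm, abs_of_pos (sub_pos.2 hss'),
        div_mul_cancel₀ _ (sub_pos.2 hss').ne']
    intro s hs s' hs'
    rcases lt_trichotomy s s' with hss' | rfl | hss'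
    · exact hlt s hs s' hs' hss'
    · simp
    · rw [dist_comm, abs_sub_comm]
      exact hlt s' hs' s hs hss'
  · push Not at hV
    refine ⟨0, fun s hs s' hs' => ?_⟩
    rw [le_antisymm (hV s' hs' s hs) (hV s hs s' hs'), dist_self, zero_mul]

end Slope

theorem exists_dist_eq_mul_abs_of_sq_add_sq {X₁ X₂ : Type*} [MetricSpace X₁] [MetricSpace X₂]
    {f : ℝ → X₁} {g : ℝ → X₂} {V : Set ℝ} {L : ℝ} (hL : 0 < L)
    (hV : ∀ s ∈ V, ∀ s' ∈ V,
      dist (f s) (f s') ^ 2 + dist (g s) (g s') ^ 2 = (L * |s - s'|) ^ 2) :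
    ∃ c, ∀ s ∈ V, ∀ s' ∈ V, dist (f s) (f s') = c * |s - s'| := by
  refine exists_dist_eq_mul_abs_of_three_point fun a ha b hb c hc hab hbc => ?_
  have habs : ∀ {s s' : ℝ}, s < s' → |s - s'| = s' - s := fun h => by
    rw [abs_sub_comm, abs_of_pos (sub_pos.2 h)]
  have hac := hV a ha c hc
  rw [habs (hab.trans hbc), show c - a = (b - a) + (c - b) by ring, mul_add] at hac
  have hab' := hV a ha b hb
  have hbc' := hV b hb c hc
  rw [habs hab] at hab'
  rw [habs hbc] at hbc'
  obtain ⟨hadd, hprop⟩ := eq_add_and_mul_eq_of_sq_add_sq dist_nonneg dist_nonneg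
    (mul_pos hL (sub_pos.2 hab)).le (mul_pos hL (sub_pos.2 hbc)).le hab' hbc' hac
    (dist_triangle _ _ _) (dist_triangle _ _ _)
  have hprop' : dist (f a) (f b) * (c - b) = dist (f b) (f c) * (b - a) :=
    mul_left_cancel₀ hL.ne' (by linear_combination hprop)
  have hca : c - a ≠ 0 := (sub_pos.2 (hab.trans hbc)).ne'
  constructor
  · rw [div_eq_div_iff (sub_pos.2 hab).ne' hca, hadd]
    linear_combination hprop'
  · rw [div_eq_div_iff (sub_pos.2 hbc).ne' hca, hadd]
    linear_combination -hprop'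

theorem exists_mem_inter_Icc_ne {t : ℝ} (ht : t ∈ Icc (0 : ℝ) 1) {U : Set ℝ} (hU : U ∈ 𝓝 t) :
    ∃ s ∈ U ∩ Icc (0 : ℝ) 1, s ≠ t := by
  rcases ht.2.lt_or_eq with ht1 | rfl
  · obtain ⟨s, hsU, hst, hs1⟩ := Filter.nonempty_of_mem
      (inter_mem (mem_nhdsWithin_of_mem_nhds hU) (Ioo_mem_nhdsGT ht1))
    exact ⟨s, ⟨hsU, ht.1.trans hst.le, hs1.le⟩, hst.ne'⟩
  · obtain ⟨s, hsU, hs0, hs1⟩ := Filter.nonempty_of_mem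
      (inter_mem (mem_nhdsWithin_of_mem_nhds hU) (Ioo_mem_nhdsLT zero_lt_one))
    exact ⟨s, ⟨hsU, hs0.le, hs1.le⟩, hs1.ne⟩

section LocalSpeed

variable {X : Type*} [MetricSpace X]

def HasLocalSpeedAt (g : ℝ → X) (c t : ℝ) : Prop :=
  ∃ U ∈ 𝓝 t, ∀ s ∈ U ∩ Icc (0 : ℝ) 1, ∀ s' ∈ U ∩ Icc (0 : ℝ) 1, dist (g s) (g s') = c * |s - s'|

def HasLocalSpeed (g : ℝ → X) (c : ℝ) : Prop :=
  ∀ t ∈ Icc (0 : ℝ) 1, HasLocalSpeedAt g c t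

theorem isGeodesicWithSpeed_iff {γ : ℝ → X} {L : ℝ} :
    IsGeodesicWithSpeed γ L ↔ 0 < L ∧ HasLocalSpeed γ L :=
  Iff.rfl

variable {g : ℝ → X} {c c' t : ℝ}

theorem HasLocalSpeedAt.nonneg (ht : t ∈ Icc (0 : ℝ) 1) (hg : HasLocalSpeedAt g c t) : 0 ≤ c := by
  obtain ⟨U, hU, hdist⟩ := hg
  obtain ⟨s, hs, hst⟩ := exists_mem_inter_Icc_ne ht hU
  have h := hdist s hs t ⟨mem_of_mem_nhds hU, ht⟩
  exact nonneg_of_mul_nonneg_left (h ▸ dist_nonneg) (abs_pos.2 (sub_ne_zero.2 hst))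

theorem HasLocalSpeedAt.unique (ht : t ∈ Icc (0 : ℝ) 1) (hc : HasLocalSpeedAt g c t)
    (hc' : HasLocalSpeedAt g c' t) : c = c' := by
  obtain ⟨U, hU, hdist⟩ := hc
  obtain ⟨U', hU', hdist'⟩ := hc'
  obtain ⟨s, ⟨⟨hsU, hsU'⟩, hs⟩, hst⟩ := exists_mem_inter_Icc_ne ht (inter_mem hU hU')
  have h := (hdist s ⟨hsU, hs⟩ t ⟨mem_of_mem_nhds hU, ht⟩).symm.trans
    (hdist' s ⟨hsU', hs⟩ t ⟨mem_of_mem_nhds hU', ht⟩)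
  exact mul_right_cancel₀ (abs_pos.2 (sub_ne_zero.2 hst)).ne' h

theorem HasLocalSpeedAt.eventually (hg : HasLocalSpeedAt g c t) :
    ∀ᶠ t' in 𝓝 t, HasLocalSpeedAt g c t' := by
  obtain ⟨U, hU, hdist⟩ := hg
  filter_upwards [eventually_mem_nhds_iff.2 hU] with t' ht'
  exact ⟨U, ht', hdist⟩

theorem exists_hasLocalSpeed_of_forall (hg : ∀ t ∈ Icc (0 : ℝ) 1, ∃ c, HasLocalSpeedAt g c t) :
    ∃ c, HasLocalSpeed g c := by
  have h0 : (0 : ℝ) ∈ Icc (0 : ℝ) 1 := ⟨le_rfl, zero_le_one⟩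
  obtain ⟨c₀, hc₀⟩ := hg 0 h0
  refine ⟨c₀, fun t ht => ?_⟩
  refine (isPreconnected_Icc.induction₂
    (fun t t' => ∀ c, HasLocalSpeedAt g c t ↔ HasLocalSpeedAt g c t') ?_
    (fun _ _ _ _ _ _ h h' c => (h c).trans (h' c))
    (fun _ _ _ _ h c => (h c).symm) h0 ht c₀).1 hc₀
  intro x hx
  obtain ⟨cₓ, hcₓ⟩ := hg x hx
  filter_upwards [nhdsWithin_le_nhds hcₓ.eventually, self_mem_nhdsWithin] with y hy hyI c
  constructor
  · intro hc
    rwa [hc.unique hx hcₓ]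
  · intro hc
    rwa [hc.unique hyI hy]

theorem HasLocalSpeed.apply_eq_apply_zero (hg : HasLocalSpeed g 0) (ht : t ∈ Icc (0 : ℝ) 1) :
    g t = g 0 := by
  refine (isPreconnected_Icc.induction₂ (fun t t' => g t = g t') ?_
    (fun _ _ _ _ _ _ => Eq.trans) (fun _ _ _ _ => Eq.symm) ht ⟨le_rfl, zero_le_one⟩)
  intro x hx
  obtain ⟨U, hU, hdist⟩ := hg x hx
  filter_upwards [nhdsWithin_le_nhds hU, self_mem_nhdsWithin] with y hyU hyI
  exact dist_eq_zero.1 ((hdist x ⟨mem_of_mem_nhds hU, hx⟩ y ⟨hyU, hyI⟩).trans (zero_mul _))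

theorem MidpointBlocks.apply_one_half_mem {x y : X} {B : Set X} (hB : MidpointBlocks x y B)
    (hg : HasLocalSpeed g c) (h0 : g 0 = x) (h1 : g 1 = y) : g (1 / 2) ∈ B ∪ {x} := by
  rcases ((hg 0 ⟨le_rfl, zero_le_one⟩).nonneg ⟨le_rfl, zero_le_one⟩).lt_or_eq with hc | rfl
  · exact Or.inl (hB g ⟨c, isGeodesicWithSpeed_iff.2 ⟨hc, hg⟩⟩ h0 h1)
  · exact Or.inr (h0 ▸ hg.apply_eq_apply_zero ⟨by norm_num, by norm_num⟩)

end LocalSpeed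

section Product

variable {X₁ X₂ : Type*} [MetricSpace X₁] [MetricSpace X₂]

theorem exists_hasLocalSpeed_of_sq_add_sq {f : ℝ → X₁} {g : ℝ → X₂} {L : ℝ} (hL : 0 < L)
    (h : ∀ t ∈ Icc (0 : ℝ) 1, ∃ U ∈ 𝓝 t, ∀ s ∈ U ∩ Icc (0 : ℝ) 1, ∀ s' ∈ U ∩ Icc (0 : ℝ) 1,
      dist (f s) (f s') ^ 2 + dist (g s) (g s') ^ 2 = (L * |s - s'|) ^ 2) :
    ∃ c, HasLocalSpeed f c :=
  exists_hasLocalSpeed_of_forall fun t ht =>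
    let ⟨U, hU, hV⟩ := h t ht
    let ⟨c, hc⟩ := exists_dist_eq_mul_abs_of_sq_add_sq hL hV
    ⟨c, U, hU, hc⟩

theorem IsGeodesicWithSpeed.exists_hasLocalSpeed_fst_snd {γ : ℝ → WithLp 2 (X₁ × X₂)} {L : ℝ}
    (hγ : IsGeodesicWithSpeed γ L) :
    (∃ c, HasLocalSpeed (fun t => (γ t).fst) c) ∧ ∃ c, HasLocalSpeed (fun t => (γ t).snd) c := by
  obtain ⟨hL, hγ⟩ := isGeodesicWithSpeed_iff.1 hγ
  have hsq : ∀ t ∈ Icc (0 : ℝ) 1, ∃ U ∈ 𝓝 t, ∀ s ∈ U ∩ Icc (0 : ℝ) 1, ∀ s' ∈ U ∩ Icc (0 : ℝ) 1,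
      dist (γ s).fst (γ s').fst ^ 2 + dist (γ s).snd (γ s').snd ^ 2 = (L * |s - s'|) ^ 2 :=
    fun t ht =>
      let ⟨U, hU, hdist⟩ := hγ t ht
      ⟨U, hU, fun s hs s' hs' => by rw [← WithLp.prod_dist_sq_eq, hdist s hs s' hs']⟩
  refine ⟨exists_hasLocalSpeed_of_sq_add_sq hL hsq,
    exists_hasLocalSpeed_of_sq_add_sq (g := fun t => (γ t).fst) hL ?_⟩
  simpa only [add_comm] using hsq

end Product

/-- The product of two midpoint secure configurations is midpoint secure, with midpoint
blocking set `(B₁ ∪ {x₁}) × (B₂ ∪ {x₂})`. -/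
theorem stmt7 {X₁ X₂ : Type*} [MetricSpace X₁] [MetricSpace X₂]
    (x₁ y₁ : X₁) (x₂ y₂ : X₂) (B₁ : Set X₁) (B₂ : Set X₂)
    (hB₁fin : B₁.Finite) (hB₂fin : B₂.Finite)
    (hB₁ : MidpointBlocks x₁ y₁ B₁) (hB₂ : MidpointBlocks x₂ y₂ B₂) :
    MidpointSecure ((WithLp.equiv 2 (X₁ × X₂)).symm (x₁, x₂))
      ((WithLp.equiv 2 (X₁ × X₂)).symm (y₁, y₂)) ∧
    ((WithLp.equiv 2 (X₁ × X₂)).symm '' ((B₁ ∪ {x₁}) ×ˢ (B₂ ∪ {x₂}))).Finite ∧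
    MidpointBlocks ((WithLp.equiv 2 (X₁ × X₂)).symm (x₁, x₂))
      ((WithLp.equiv 2 (X₁ × X₂)).symm (y₁, y₂))
      ((WithLp.equiv 2 (X₁ × X₂)).symm '' ((B₁ ∪ {x₁}) ×ˢ (B₂ ∪ {x₂}))) := by
  have hfin : ((WithLp.equiv 2 (X₁ × X₂)).symm '' ((B₁ ∪ {x₁}) ×ˢ (B₂ ∪ {x₂}))).Finite :=
    ((hB₁fin.union (finite_singleton x₁)).prod (hB₂fin.union (finite_singleton x₂))).image _
  have hblocks : MidpointBlocks ((WithLp.equiv 2 (X₁ × X₂)).symm (x₁, x₂))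
      ((WithLp.equiv 2 (X₁ × X₂)).symm (y₁, y₂))
      ((WithLp.equiv 2 (X₁ × X₂)).symm '' ((B₁ ∪ {x₁}) ×ˢ (B₂ ∪ {x₂}))) := by
    rintro γ ⟨L, hγ⟩ h0 h1
    obtain ⟨⟨c₁, hc₁⟩, c₂, hc₂⟩ := hγ.exists_hasLocalSpeed_fst_snd
    exact ⟨((γ (1 / 2)).fst, (γ (1 / 2)).snd),
      mk_mem_prod (hB₁.apply_one_half_mem hc₁ (congrArg (·.fst) h0) (congrArg (·.fst) h1))
        (hB₂.apply_one_half_mem hc₂ (congrArg (·.snd) h0) (congrArg (·.snd) h1)), rfl⟩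
  exact ⟨⟨_, hfin, hblocks⟩, hfin, hblocks⟩
end

section
/- Let X and Y be metric spaces, equip X × Y with the ℓ² product metric, and let p, q ∈ Y. Suppose there is an infinite family (σᵢ)_{i ∈ ℕ} of geodesics in Y, each joining p to p, such that: (a) for every i and every t ∈ (0,1), σᵢ(t) = q holds if and only if t = 1/2; and (b) for all i ≠ j and all s, t ∈ (0,1), if σᵢ(s) = σⱼ(t) then σᵢ(s) = q. If x, y ∈ X and the configuration ((x, p), (y, p)) is secure in X × Y with finite blocking set B, then the configuration (x, y) is midpoint secure in X, with midpoint blocking set π₁(B). (This abstracts the proof of the paper's Proposition on M × S², where Y is the round 2-sphere, p any point, q its antipodal point, and the σᵢ are simple great circles through p.) -/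
theorem WithLp.prod_dist_eq_sqrt {X Y : Type*} [MetricSpace X] [MetricSpace Y]
    (f g : WithLp 2 (X × Y)) :
    dist f g = √(dist f.fst g.fst ^ 2 + dist f.snd g.snd ^ 2) := by
  rw [WithLp.prod_dist_eq_add (by norm_num), Real.sqrt_eq_rpow]
  norm_num

theorem IsGeodesicWithSpeed.prodL2 {X Y : Type*} [MetricSpace X] [MetricSpace Y]
    {γ : ℝ → X} {σ : ℝ → Y} {L M : ℝ} (hγ : IsGeodesicWithSpeed γ L)
    (hσ : IsGeodesicWithSpeed σ M) :
    IsGeodesicWithSpeed (fun t => (WithLp.equiv 2 (X × Y)).symm (γ t, σ t)) √(L ^ 2 + M ^ 2) := by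
  obtain ⟨hL, hγ⟩ := hγ
  obtain ⟨hM, hσ⟩ := hσ
  refine ⟨Real.sqrt_pos.2 (by positivity), fun t ht => ?_⟩
  obtain ⟨U, hU, hγU⟩ := hγ t ht
  obtain ⟨V, hV, hσV⟩ := hσ t ht
  refine ⟨U ∩ V, Filter.inter_mem hU hV, fun s hs s' hs' => ?_⟩
  simp only [WithLp.prod_dist_eq_sqrt, WithLp.equiv_symm_apply, WithLp.toLp_fst,
    WithLp.toLp_snd]
  rw [hγU s ⟨hs.1.1, hs.2⟩ s' ⟨hs'.1.1, hs'.2⟩, hσV s ⟨hs.1.2, hs.2⟩ s' ⟨hs'.1.2, hs'.2⟩,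
    mul_pow, mul_pow, ← add_mul, Real.sqrt_mul (by positivity), Real.sqrt_sq_eq_abs, abs_abs]

theorem IsGeodesic.prodL2 {X Y : Type*} [MetricSpace X] [MetricSpace Y]
    {γ : ℝ → X} {σ : ℝ → Y} (hγ : IsGeodesic γ) (hσ : IsGeodesic σ) :
    IsGeodesic (fun t => (WithLp.equiv 2 (X × Y)).symm (γ t, σ t)) :=
  let ⟨_, hγ⟩ := hγ
  let ⟨_, hσ⟩ := hσ
  ⟨_, hγ.prodL2 hσ⟩

/-- If `Y` contains an infinite family of geodesic loops at `p` whose only interior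
intersections and whose only passages through a common point occur at `q`, reached
exactly at time `1/2`, then security of `((x,p),(y,p))` in the ℓ² product forces
midpoint security of `(x,y)` in `X`, with midpoint blocking set `π₁(B)`. -/
theorem stmt9 {X Y : Type*} [MetricSpace X] [MetricSpace Y] (p q : Y)
    (σ : ℕ → ℝ → Y)
    (hσgeo : ∀ i, IsGeodesic (σ i))
    (hσjoin : ∀ i, σ i 0 = p ∧ σ i 1 = p)
    (ha : ∀ i, ∀ t ∈ Set.Ioo (0:ℝ) 1, (σ i t = q ↔ t = 1/2))
    (hb : ∀ i j, i ≠ j → ∀ s ∈ Set.Ioo (0:ℝ) 1, ∀ t ∈ Set.Ioo (0:ℝ) 1,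
      σ i s = σ j t → σ i s = q)
    (x y : X) (B : Set (WithLp 2 (X × Y))) (hBfin : B.Finite)
    (hB : Blocks ((WithLp.equiv 2 (X × Y)).symm (x, p))
      ((WithLp.equiv 2 (X × Y)).symm (y, p)) B) :
    MidpointSecure x y ∧
    MidpointBlocks x y ((fun z => (WithLp.equiv 2 (X × Y) z).1) '' B) := by
  have hmid : MidpointBlocks x y ((fun z => (WithLp.equiv 2 (X × Y) z).1) '' B) := by
    intro γ hγ hγ0 hγ1
    let lift : ℕ → ℝ → WithLp 2 (X × Y) := fun i t => (WithLp.equiv 2 (X × Y)).symm (γ t, σ i t)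
    have hhit : ∀ i, ∃ t ∈ Set.Ioo (0:ℝ) 1, lift i t ∈ B := fun i =>
      hB _ (hγ.prodL2 (hσgeo i)) (by simp [lift, hγ0, (hσjoin i).1])
        (by simp [lift, hγ1, (hσjoin i).2])
    choose τ hτ hτB using hhit
    have : Finite B := hBfin
    obtain ⟨i, j, hij, hcoll⟩ :=
      Finite.exists_ne_map_eq_of_infinite fun i => (⟨lift i (τ i), hτB i⟩ : B)
    have hσij : σ i (τ i) = σ j (τ j) := congrArg (fun z => z.val.snd) hcoll
    have hhalf : τ i = 1 / 2 := (ha i _ (hτ i)).1 (hb i j hij _ (hτ i) _ (hτ j) hσij)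
    exact ⟨lift i (τ i), hτB i, by simp [lift, hhalf]⟩
  exact ⟨⟨_, hBfin.image _, hmid⟩, hmid⟩
end

section
/- Let X₁ and X₂ be metric spaces and equip X₁ × X₂ with the ℓ² product metric. Assume that every secure configuration in X₁ is midpoint secure and every secure configuration in X₂ is midpoint secure. If (x₁, y₁) is a secure configuration in X₁ and (x₂, y₂) is a secure configuration in X₂, then the configuration ((x₁, x₂), (y₁, y₂)) is secure in X₁ × X₂. -/
open Set in
private lemma dist_sq_prodL2 {X₁ X₂ : Type*} [MetricSpace X₁] [MetricSpace X₂]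
    (z w : WithLp 2 (X₁ × X₂)) :
    dist z w ^ 2 = dist z.fst w.fst ^ 2 + dist z.snd w.snd ^ 2 := by
  have h := WithLp.prod_dist_eq_add (p := 2) (by norm_num) z w
  rw [h, ENNReal.toReal_ofNat, ← Real.rpow_natCast _ 2, ← Real.rpow_mul (by positivity)]
  norm_num

private lemma sq_eq_of_nonneg {x y : ℝ} (hx : 0 ≤ x) (hy : 0 ≤ y) (h : x ^ 2 = y ^ 2) :
    x = y := by
  rw [← Real.sqrt_sq hx, ← Real.sqrt_sq hy, h]

private lemma key_alg {p q p' q' P Q a b : ℝ}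
    (hp : 0 ≤ p) (hq : 0 ≤ q) (hp' : 0 ≤ p') (hq' : 0 ≤ q') (hP : 0 ≤ P) (hQ : 0 ≤ Q)
    (ha : 0 < a) (hb : 0 < b)
    (hPt : P ≤ p + p') (hQt : Q ≤ q + q')
    (h1 : p ^ 2 + q ^ 2 = a ^ 2) (h2 : p' ^ 2 + q' ^ 2 = b ^ 2)
    (h3 : P ^ 2 + Q ^ 2 = (a + b) ^ 2) :
    P = p + p' ∧ Q = q + q' ∧ p * b = p' * a ∧ q * b = q' * a := by
  have hprod : (p ^ 2 + q ^ 2) * (p' ^ 2 + q' ^ 2) = a ^ 2 * b ^ 2 := by rw [h1, h2]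
  have hX : (p * p' + q * q') ^ 2 ≤ (a * b) ^ 2 := by
    nlinarith [sq_nonneg (p * q' - p' * q)]
  have hXnn : 0 ≤ p * p' + q * q' := by positivity
  have hcs : p * p' + q * q' ≤ a * b := by
    have h := Real.sqrt_le_sqrt hX
    rwa [Real.sqrt_sq hXnn, Real.sqrt_sq (by positivity)] at h
  have e1 : P ^ 2 ≤ (p + p') ^ 2 := pow_le_pow_left₀ hP hPt 2
  have e2 : Q ^ 2 ≤ (q + q') ^ 2 := pow_le_pow_left₀ hQ hQt 2
  have etot : (p + p') ^ 2 + (q + q') ^ 2 ≤ (a + b) ^ 2 := by nlinarith [hcs]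
  have hP2 : P ^ 2 = (p + p') ^ 2 := by linarith
  have hQ2 : Q ^ 2 = (q + q') ^ 2 := by linarith
  have hPe : P = p + p' := sq_eq_of_nonneg hP (by linarith) hP2
  have hQe : Q = q + q' := sq_eq_of_nonneg hQ (by linarith) hQ2
  have h3' : (p + p') ^ 2 + (q + q') ^ 2 = (a + b) ^ 2 := by rw [← hPe, ← hQe]; exact h3
  have hcseq : p * p' + q * q' = a * b := by
    linear_combination (1/2 : ℝ) * h3' - (1/2 : ℝ) * h1 - (1/2 : ℝ) * h2
  have hpar0 : (p * q' - p' * q) ^ 2 = 0 := by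
    linear_combination hprod - (p * p' + q * q' + a * b) * hcseq
  have hpar : p * q' = p' * q := by
    have := sq_eq_zero_iff.mp hpar0
    linarith
  have hpb : p * b = p' * a :=
    sq_eq_of_nonneg (mul_nonneg hp hb.le) (mul_nonneg hp' ha.le)
      (by linear_combination -(p ^ 2) * h2 + (p' ^ 2) * h1 + (p * q' + p' * q) * hpar)
  have hqb : q * b = q' * a :=
    sq_eq_of_nonneg (mul_nonneg hq hb.le) (mul_nonneg hq' ha.le)
      (by linear_combination -(q ^ 2) * h2 + (q' ^ 2) * h1 - (p * q' + p' * q) * hpar)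
  exact ⟨hPe, hQe, hpb, hqb⟩

private lemma ratio_const {K : Set ℝ} {d : ℝ → ℝ → ℝ}
    (h3 : ∀ s ∈ K, ∀ u ∈ K, ∀ s' ∈ K, s < u → u < s' →
      d s s' = d s u + d u s' ∧ d s u * (s' - u) = d u s' * (u - s)) :
    ∀ s ∈ K, ∀ s' ∈ K, ∀ v ∈ K, ∀ v' ∈ K, s < s' → v < v' →
      d s s' * (v' - v) = d v v' * (s' - s) := by
  have step1 : ∀ s ∈ K, ∀ a ∈ K, ∀ b ∈ K, s < a → a ≤ b →
      d s a * (b - s) = d s b * (a - s) := by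
    intro s hs a ha b hb hsa hab
    rcases eq_or_lt_of_le hab with rfl | hab
    · ring
    · obtain ⟨hadd, hprop⟩ := h3 s hs a ha b hb hsa hab
      linear_combination hprop - (a - s) * hadd
  have step2 : ∀ a ∈ K, ∀ b ∈ K, ∀ s ∈ K, a ≤ b → b < s →
      d b s * (s - a) = d a s * (s - b) := by
    intro a ha b hb s hs hab hbs
    rcases eq_or_lt_of_le hab with rfl | hab
    · ring
    · obtain ⟨hadd, hprop⟩ := h3 a ha b hb s hs hab hbs
      linear_combination (-1 : ℝ) * hprop - (s - b) * hadd
  have hull : ∀ m ∈ K, ∀ M ∈ K, ∀ s ∈ K, ∀ s' ∈ K, m ≤ s → s < s' → s' ≤ M →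
      d s s' * (M - m) = d m M * (s' - s) := by
    intro m hm M hM s hs s' hs' hms hss hsM
    have h1 : d s s' * (s' - m) = d m s' * (s' - s) := step2 m hm s hs s' hs' hms hss
    have h2 : d m s' * (M - m) = d m M * (s' - m) :=
      step1 m hm s' hs' M hM (lt_of_le_of_lt hms hss) hsM
    have hsm : (0:ℝ) < s' - m := by linarith
    have key : d s s' * (M - m) * (s' - m) = d m M * (s' - s) * (s' - m) := by
      linear_combination (M - m) * h1 + (s' - s) * h2
    exact mul_right_cancel₀ (ne_of_gt hsm) key
  intro s hs s' hs' v hv v' hv' hss hvv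
  have hmK : min s v ∈ K := by
    rcases le_total s v with h | h
    · rwa [min_eq_left h]
    · rwa [min_eq_right h]
  have hMK : max s' v' ∈ K := by
    rcases le_total s' v' with h | h
    · rwa [max_eq_right h]
    · rwa [max_eq_left h]
  have e1 : d s s' * (max s' v' - min s v) = d (min s v) (max s' v') * (s' - s) :=
    hull _ hmK _ hMK s hs s' hs' (min_le_left _ _) hss (le_max_left _ _)
  have e2 : d v v' * (max s' v' - min s v) = d (min s v) (max s' v') * (v' - v) :=
    hull _ hmK _ hMK v hv v' hv' (min_le_right _ _) hvv (le_max_right _ _)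
  have hMm : (0:ℝ) < max s' v' - min s v := by
    have h1 : min s v ≤ s := min_le_left _ _
    have h2 : s' ≤ max s' v' := le_max_left _ _
    linarith
  have key : d s s' * (v' - v) * (max s' v' - min s v)
      = d v v' * (s' - s) * (max s' v' - min s v) := by
    linear_combination (v' - v) * e1 - (s' - s) * e2
  exact mul_right_cancel₀ (ne_of_gt hMm) key

private lemma exists_two_points {t : ℝ} (ht : t ∈ Set.Icc (0:ℝ) 1) {W : Set ℝ}
    (hW : W ∈ nhds t) :
    ∃ u v, u ∈ W ∩ Set.Icc (0:ℝ) 1 ∧ v ∈ W ∩ Set.Icc (0:ℝ) 1 ∧ u < v := by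
  obtain ⟨ε, hε, hball⟩ := Metric.mem_nhds_iff.mp hW
  obtain ⟨ht0, ht1⟩ := ht
  set e := min (ε / 2) (1 / 2) with he
  have he0 : 0 < e := lt_min (by linarith) (by norm_num)
  have heε : e < ε := lt_of_le_of_lt (min_le_left _ _) (by linarith)
  refine ⟨max 0 (t - e), min 1 (t + e), ⟨hball ?_, ?_, ?_⟩, ⟨hball ?_, ?_, ?_⟩, ?_⟩
  · rw [Metric.mem_ball, Real.dist_eq, abs_lt]
    constructor
    · have : t - e ≤ max 0 (t - e) := le_max_right _ _
      linarith
    · have : max 0 (t - e) ≤ t := max_le ht0 (by linarith)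
      linarith
  · exact le_max_left _ _
  · exact max_le (by linarith) (by linarith)
  · rw [Metric.mem_ball, Real.dist_eq, abs_lt]
    constructor
    · have : t ≤ min 1 (t + e) := le_min ht1 (by linarith)
      linarith
    · have : min 1 (t + e) ≤ t + e := min_le_right _ _
      linarith
  · exact le_min (by linarith) (by linarith)
  · exact min_le_left _ _
  · apply max_lt
    · exact lt_min (by norm_num) (by linarith)
    · exact lt_min (by linarith) (by linarith)

open Set in
private lemma locally_const_Icc {P : ℝ → Prop}
    (h : ∀ t ∈ Set.Icc (0:ℝ) 1, ∃ U ∈ nhds t,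
      (∀ s ∈ U ∩ Set.Icc (0:ℝ) 1, P s) ∨ (∀ s ∈ U ∩ Set.Icc (0:ℝ) 1, ¬ P s))
    (h0 : P 0) : ∀ t ∈ Set.Icc (0:ℝ) 1, P t := by
  by_contra hcon
  push_neg at hcon
  obtain ⟨t₀, ht₀, ht₀P⟩ := hcon
  classical
  choose U hUn hUd using h
  set u : Set ℝ := ⋃ (t : ℝ) (ht : t ∈ Set.Icc (0:ℝ) 1 ∧ P t), interior (U t ht.1) with hu_def
  set v : Set ℝ := ⋃ (t : ℝ) (ht : t ∈ Set.Icc (0:ℝ) 1 ∧ ¬ P t), interior (U t ht.1) with hv_def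
  have hu : IsOpen u := isOpen_iUnion fun _ => isOpen_iUnion fun _ => isOpen_interior
  have hv : IsOpen v := isOpen_iUnion fun _ => isOpen_iUnion fun _ => isOpen_interior
  have husub : ∀ s ∈ Set.Icc (0:ℝ) 1 ∩ u, P s := by
    rintro s ⟨hs, hsu⟩
    simp only [hu_def, mem_iUnion] at hsu
    obtain ⟨t, ⟨htI, htP⟩, hsU⟩ := hsu
    rcases hUd t htI with hyes | hno
    · exact hyes s ⟨interior_subset hsU, hs⟩
    · exact absurd htP (hno t ⟨mem_of_mem_nhds (hUn t htI), htI⟩)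
  have hvsub : ∀ s ∈ Set.Icc (0:ℝ) 1 ∩ v, ¬ P s := by
    rintro s ⟨hs, hsv⟩
    simp only [hv_def, mem_iUnion] at hsv
    obtain ⟨t, ⟨htI, htP⟩, hsU⟩ := hsv
    rcases hUd t htI with hyes | hno
    · exact absurd (hyes t ⟨mem_of_mem_nhds (hUn t htI), htI⟩) htP
    · exact hno s ⟨interior_subset hsU, hs⟩
  have hcover : Set.Icc (0:ℝ) 1 ⊆ u ∪ v := by
    intro t htI
    by_cases htP : P t
    · left
      simp only [hu_def, mem_iUnion]
      exact ⟨t, ⟨htI, htP⟩, mem_interior_iff_mem_nhds.mpr (hUn t htI)⟩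
    · right
      simp only [hv_def, mem_iUnion]
      exact ⟨t, ⟨htI, htP⟩, mem_interior_iff_mem_nhds.mpr (hUn t htI)⟩
  have hne1 : (Set.Icc (0:ℝ) 1 ∩ u).Nonempty := by
    refine ⟨0, ⟨le_refl 0, zero_le_one⟩, ?_⟩
    simp only [hu_def, mem_iUnion]
    exact ⟨0, ⟨⟨le_refl 0, zero_le_one⟩, h0⟩,
      mem_interior_iff_mem_nhds.mpr (hUn 0 ⟨le_refl 0, zero_le_one⟩)⟩
  have hne2 : (Set.Icc (0:ℝ) 1 ∩ v).Nonempty := by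
    refine ⟨t₀, ht₀, ?_⟩
    simp only [hv_def, mem_iUnion]
    exact ⟨t₀, ⟨ht₀, ht₀P⟩, mem_interior_iff_mem_nhds.mpr (hUn t₀ ht₀)⟩
  obtain ⟨s, hsI, hsu, hsv⟩ := isPreconnected_Icc u v hu hv hcover hne1 hne2
  exact hvsub s ⟨hsI, hsv⟩ (husub s ⟨hsI, hsu⟩)

private lemma proj_global {X₁ X₂ : Type*} [MetricSpace X₁] [MetricSpace X₂]
    (γ : ℝ → WithLp 2 (X₁ × X₂)) (L : ℝ) (hγ : IsGeodesicWithSpeed γ L) :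
    ∃ c₁ c₂ : ℝ, 0 ≤ c₁ ∧ 0 ≤ c₂ ∧ c₁ ^ 2 + c₂ ^ 2 = L ^ 2 ∧
      ∀ t ∈ Set.Icc (0:ℝ) 1, ∃ U ∈ nhds t,
        ∀ s ∈ U ∩ Set.Icc (0:ℝ) 1, ∀ s' ∈ U ∩ Set.Icc (0:ℝ) 1,
          dist (γ s).fst (γ s').fst = c₁ * |s - s'| ∧
          dist (γ s).snd (γ s').snd = c₂ * |s - s'| := by
  obtain ⟨hL, hloc⟩ := hγ
  have hlocal : ∀ t ∈ Set.Icc (0:ℝ) 1, ∃ a b : ℝ, ∃ U ∈ nhds t, IsOpen U ∧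
      0 ≤ a ∧ 0 ≤ b ∧ a ^ 2 + b ^ 2 = L ^ 2 ∧
      ∀ s ∈ U ∩ Set.Icc (0:ℝ) 1, ∀ s' ∈ U ∩ Set.Icc (0:ℝ) 1,
        dist (γ s).fst (γ s').fst = a * |s - s'| ∧
        dist (γ s).snd (γ s').snd = b * |s - s'| := by
    intro t ht
    obtain ⟨U₀, hU₀, hiso⟩ := hloc t ht
    obtain ⟨ε, hε, hball⟩ := Metric.mem_nhds_iff.mp hU₀
    set U := Metric.ball t ε with hUdef
    have hUn : U ∈ nhds t := Metric.ball_mem_nhds t hε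
    have hiso' : ∀ s ∈ U ∩ Set.Icc (0:ℝ) 1, ∀ s' ∈ U ∩ Set.Icc (0:ℝ) 1,
        dist (γ s) (γ s') = L * |s - s'| :=
      fun s hs s' hs' => hiso s ⟨hball hs.1, hs.2⟩ s' ⟨hball hs'.1, hs'.2⟩
    have hdist : ∀ s ∈ U ∩ Set.Icc (0:ℝ) 1, ∀ s' ∈ U ∩ Set.Icc (0:ℝ) 1, s < s' →
        dist (γ s).fst (γ s').fst ^ 2 + dist (γ s).snd (γ s').snd ^ 2
          = (L * (s' - s)) ^ 2 := by
      intro s hs s' hs' hss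
      have e := dist_sq_prodL2 (γ s) (γ s')
      have habs : dist (γ s) (γ s') = L * (s' - s) := by
        rw [hiso' s hs s' hs', abs_sub_comm, abs_of_pos (by linarith)]
      rw [habs] at e
      linarith
    have h3 : ∀ s ∈ U ∩ Set.Icc (0:ℝ) 1, ∀ u ∈ U ∩ Set.Icc (0:ℝ) 1,
        ∀ s' ∈ U ∩ Set.Icc (0:ℝ) 1, s < u → u < s' →
        (dist (γ s).fst (γ s').fst = dist (γ s).fst (γ u).fst + dist (γ u).fst (γ s').fst ∧
          dist (γ s).fst (γ u).fst * (s' - u) = dist (γ u).fst (γ s').fst * (u - s)) ∧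
        (dist (γ s).snd (γ s').snd = dist (γ s).snd (γ u).snd + dist (γ u).snd (γ s').snd ∧
          dist (γ s).snd (γ u).snd * (s' - u) = dist (γ u).snd (γ s').snd * (u - s)) := by
      intro s hs u hu s' hs' hsu hus
      have h1 := hdist s hs u hu hsu
      have h2 := hdist u hu s' hs' hus
      have h3' := hdist s hs s' hs' (hsu.trans hus)
      have h3'' : dist (γ s).fst (γ s').fst ^ 2 + dist (γ s).snd (γ s').snd ^ 2
          = (L * (u - s) + L * (s' - u)) ^ 2 := by rw [h3']; ring_nf
      obtain ⟨hP, hQ, hpb, hqb⟩ := key_alg dist_nonneg dist_nonneg dist_nonneg dist_nonneg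
        dist_nonneg dist_nonneg (mul_pos hL (by linarith)) (mul_pos hL (by linarith))
        (dist_triangle _ _ _) (dist_triangle _ _ _) h1 h2 h3''
      refine ⟨⟨hP, ?_⟩, ⟨hQ, ?_⟩⟩
      · apply mul_left_cancel₀ (ne_of_gt hL)
        linear_combination hpb
      · apply mul_left_cancel₀ (ne_of_gt hL)
        linear_combination hqb
    have R1 := ratio_const (d := fun s s' => dist (γ s).fst (γ s').fst)
      (fun s hs u hu s' hs' h h' => (h3 s hs u hu s' hs' h h').1)
    have R2 := ratio_const (d := fun s s' => dist (γ s).snd (γ s').snd)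
      (fun s hs u hu s' hs' h h' => (h3 s hs u hu s' hs' h h').2)
    obtain ⟨u₀, v₀, hu₀, hv₀, huv⟩ := exists_two_points ht hUn
    have hvu : (0:ℝ) < v₀ - u₀ := by linarith
    refine ⟨dist (γ u₀).fst (γ v₀).fst / (v₀ - u₀), dist (γ u₀).snd (γ v₀).snd / (v₀ - u₀),
      U, hUn, Metric.isOpen_ball, div_nonneg dist_nonneg hvu.le,
      div_nonneg dist_nonneg hvu.le, ?_, ?_⟩
    · have h0 := hdist u₀ hu₀ v₀ hv₀ huv
      field_simp
      linear_combination h0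
    · have main : ∀ s ∈ U ∩ Set.Icc (0:ℝ) 1, ∀ s' ∈ U ∩ Set.Icc (0:ℝ) 1, s < s' →
          dist (γ s).fst (γ s').fst = dist (γ u₀).fst (γ v₀).fst / (v₀ - u₀) * (s' - s) ∧
          dist (γ s).snd (γ s').snd = dist (γ u₀).snd (γ v₀).snd / (v₀ - u₀) * (s' - s) := by
        intro s hs s' hs' hss
        have r1 := R1 s hs s' hs' u₀ hu₀ v₀ hv₀ hss huv
        have r2 := R2 s hs s' hs' u₀ hu₀ v₀ hv₀ hss huv
        constructor
        · rw [div_mul_eq_mul_div, eq_div_iff (ne_of_gt hvu)]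
          linarith [r1]
        · rw [div_mul_eq_mul_div, eq_div_iff (ne_of_gt hvu)]
          linarith [r2]
      intro s hs s' hs'
      rcases lt_trichotomy s s' with h | h | h
      · have := main s hs s' hs' h
        rw [abs_sub_comm, abs_of_pos (by linarith)]
        exact this
      · subst h
        simp
      · have := main s' hs' s hs h
        rw [abs_of_pos (by linarith), dist_comm (γ s).fst, dist_comm (γ s).snd]
        exact this
  obtain ⟨c₁, c₂, U₀, hU₀n, hU₀o, hc₁, hc₂, hsq, hsc₀⟩ :=
    hlocal 0 ⟨le_refl 0, zero_le_one⟩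
  refine ⟨c₁, c₂, hc₁, hc₂, hsq, ?_⟩
  exact locally_const_Icc (P := fun t => ∃ U ∈ nhds t,
      ∀ s ∈ U ∩ Set.Icc (0:ℝ) 1, ∀ s' ∈ U ∩ Set.Icc (0:ℝ) 1,
        dist (γ s).fst (γ s').fst = c₁ * |s - s'| ∧
        dist (γ s).snd (γ s').snd = c₂ * |s - s'|)
    (by
      intro t ht
      obtain ⟨a, b, U, hUn, hUo, ha, hb, hab, hsc⟩ := hlocal t ht
      refine ⟨U, hUn, ?_⟩
      by_cases hcase : a = c₁ ∧ b = c₂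
      · left
        intro s hsK
        obtain ⟨rfl, rfl⟩ := hcase
        exact ⟨U, hUo.mem_nhds hsK.1, hsc⟩
      · right
        intro s hsK hPs
        obtain ⟨W, hWn, hWsc⟩ := hPs
        have hWU : W ∩ U ∈ nhds s := Filter.inter_mem hWn (hUo.mem_nhds hsK.1)
        obtain ⟨u, v, hu, hv, huv⟩ := exists_two_points hsK.2 hWU
        have habs : |u - v| ≠ 0 := abs_ne_zero.mpr (by linarith)
        have h1 := (hsc u ⟨hu.1.2, hu.2⟩ v ⟨hv.1.2, hv.2⟩).1
        have h1' := (hWsc u ⟨hu.1.1, hu.2⟩ v ⟨hv.1.1, hv.2⟩).1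
        have h2 := (hsc u ⟨hu.1.2, hu.2⟩ v ⟨hv.1.2, hv.2⟩).2
        have h2' := (hWsc u ⟨hu.1.1, hu.2⟩ v ⟨hv.1.1, hv.2⟩).2
        exact hcase ⟨mul_right_cancel₀ habs (h1.symm.trans h1'),
          mul_right_cancel₀ habs (h2.symm.trans h2')⟩)
    ⟨U₀, hU₀n, hsc₀⟩

/-- If in each factor every secure configuration is midpoint secure, then the product of
two secure configurations is secure in the ℓ² product. -/
theorem stmt10 {X₁ X₂ : Type*} [MetricSpace X₁] [MetricSpace X₂]
    (h₁ : ∀ x y : X₁, Secure x y → MidpointSecure x y)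
    (h₂ : ∀ x y : X₂, Secure x y → MidpointSecure x y)
    (x₁ y₁ : X₁) (x₂ y₂ : X₂)
    (hs₁ : Secure x₁ y₁) (hs₂ : Secure x₂ y₂) :
    Secure ((WithLp.equiv 2 (X₁ × X₂)).symm (x₁, x₂))
      ((WithLp.equiv 2 (X₁ × X₂)).symm (y₁, y₂)) := by
  obtain ⟨M₁, hM₁f, hM₁⟩ := h₁ x₁ y₁ hs₁
  obtain ⟨M₂, hM₂f, hM₂⟩ := h₂ x₂ y₂ hs₂
  obtain ⟨B₁, hB₁f, hB₁⟩ := hs₁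
  obtain ⟨B₂, hB₂f, hB₂⟩ := hs₂
  classical
  refine ⟨(WithLp.equiv 2 (X₁ × X₂)).symm ''
    ((M₁ ×ˢ M₂ ∪ B₁ ×ˢ {x₂}) ∪ {x₁} ×ˢ B₂), ?_, ?_⟩
  · exact (((hM₁f.prod hM₂f).union (hB₁f.prod (Set.finite_singleton x₂))).union
      ((Set.finite_singleton x₁).prod hB₂f)).image _
  · intro γ hγ hγ0 hγ1
    obtain ⟨L, hgeo⟩ := hγ
    have hL := hgeo.1
    obtain ⟨c₁, c₂, hc₁, hc₂, hsq, Hglob⟩ := proj_global γ L hgeo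
    have hfst0 : (γ 0).fst = x₁ := by rw [hγ0]; rfl
    have hfst1 : (γ 1).fst = y₁ := by rw [hγ1]; rfl
    have hsnd0 : (γ 0).snd = x₂ := by rw [hγ0]; rfl
    have hsnd1 : (γ 1).snd = y₂ := by rw [hγ1]; rfl
    have geo1 : 0 < c₁ → IsGeodesicWithSpeed (fun s => (γ s).fst) c₁ := fun hpos =>
      ⟨hpos, fun t ht => by
        obtain ⟨U, hUn, hsc⟩ := Hglob t ht
        exact ⟨U, hUn, fun s hs s' hs' => (hsc s hs s' hs').1⟩⟩
    have geo2 : 0 < c₂ → IsGeodesicWithSpeed (fun s => (γ s).snd) c₂ := fun hpos =>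
      ⟨hpos, fun t ht => by
        obtain ⟨U, hUn, hsc⟩ := Hglob t ht
        exact ⟨U, hUn, fun s hs s' hs' => (hsc s hs s' hs').2⟩⟩
    have const1 : c₁ = 0 → ∀ t ∈ Set.Icc (0:ℝ) 1, (γ t).fst = (γ 0).fst := by
      intro hc0
      apply locally_const_Icc
      · intro t ht
        obtain ⟨U, hUn, hsc⟩ := Hglob t ht
        have htK : t ∈ U ∩ Set.Icc (0:ℝ) 1 := ⟨mem_of_mem_nhds hUn, ht⟩
        have hcst : ∀ s ∈ U ∩ Set.Icc (0:ℝ) 1, (γ s).fst = (γ t).fst := by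
          intro s hsK
          have h := (hsc s hsK t htK).1
          rw [hc0, zero_mul] at h
          exact dist_eq_zero.mp h
        refine ⟨U, hUn, ?_⟩
        by_cases hPt : (γ t).fst = (γ 0).fst
        · left; intro s hs; rw [hcst s hs, hPt]
        · right; intro s hs hPs; exact hPt ((hcst s hs).symm.trans hPs)
      · rfl
    have const2 : c₂ = 0 → ∀ t ∈ Set.Icc (0:ℝ) 1, (γ t).snd = (γ 0).snd := by
      intro hc0
      apply locally_const_Icc
      · intro t ht
        obtain ⟨U, hUn, hsc⟩ := Hglob t ht
        have htK : t ∈ U ∩ Set.Icc (0:ℝ) 1 := ⟨mem_of_mem_nhds hUn, ht⟩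
        have hcst : ∀ s ∈ U ∩ Set.Icc (0:ℝ) 1, (γ s).snd = (γ t).snd := by
          intro s hsK
          have h := (hsc s hsK t htK).2
          rw [hc0, zero_mul] at h
          exact dist_eq_zero.mp h
        refine ⟨U, hUn, ?_⟩
        by_cases hPt : (γ t).snd = (γ 0).snd
        · left; intro s hs; rw [hcst s hs, hPt]
        · right; intro s hs hPs; exact hPt ((hcst s hs).symm.trans hPs)
      · rfl
    by_cases h1pos : 0 < c₁
    · by_cases h2pos : 0 < c₂
      · refine ⟨1/2, by norm_num, ?_⟩
        refine ⟨((γ (1/2:ℝ)).fst, (γ (1/2:ℝ)).snd), ?_, rfl⟩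
        exact Or.inl (Or.inl (Set.mem_prod.mpr
          ⟨hM₁ (fun s => (γ s).fst) ⟨c₁, geo1 h1pos⟩ hfst0 hfst1,
           hM₂ (fun s => (γ s).snd) ⟨c₂, geo2 h2pos⟩ hsnd0 hsnd1⟩))
      · have hc₂0 : c₂ = 0 := le_antisymm (not_lt.mp h2pos) hc₂
        obtain ⟨t, htI, htB⟩ := hB₁ (fun s => (γ s).fst) ⟨c₁, geo1 h1pos⟩ hfst0 hfst1
        refine ⟨t, htI, ?_⟩
        refine ⟨((γ t).fst, (γ t).snd), ?_, rfl⟩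
        refine Or.inl (Or.inr (Set.mem_prod.mpr ⟨htB, ?_⟩))
        have := const2 hc₂0 t ⟨htI.1.le, htI.2.le⟩
        rw [Set.mem_singleton_iff, this, hsnd0]
    · have hc₁0 : c₁ = 0 := le_antisymm (not_lt.mp h1pos) hc₁
      have h2pos : 0 < c₂ := by nlinarith
      obtain ⟨t, htI, htB⟩ := hB₂ (fun s => (γ s).snd) ⟨c₂, geo2 h2pos⟩ hsnd0 hsnd1
      refine ⟨t, htI, ?_⟩
      refine ⟨((γ t).fst, (γ t).snd), ?_, rfl⟩
      refine Or.inr (Set.mem_prod.mpr ⟨?_, htB⟩)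
      have := const1 hc₁0 t ⟨htI.1.le, htI.2.le⟩
      rw [Set.mem_singleton_iff, this, hfst0]
end
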